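/- arXiv:1505.01993 — 11 statements merged into one kernel-verified Lean document; each statement's English description precedes it below -/
import Mathlib

section
/- For every integer q ≥ 2 and all integers n, s with 1 ≤ s ≤ n−1, the polynomial identity M_{n,s}(x,y) − (q+1)·M_{n,s+1}(x,y) + q·M_{n,s+2}(x,y) = (q−1)·C(n,s)·(x−y)^{n−s}·y^{s} holds in ℚ[x,y]. -/
/-- The MDS weight enumerator `M_{n,s}(x,y)` over a field with `q` elements,
evaluated at rationals `x, y`. -/
noncomputable def Mds (q n s : ℕ) (x y : ℚ) : ℚ :=
  x ^ n + ∑ w ∈ Finset.Icc s n, (n.choose w : ℚ) *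
    (∑ i ∈ Finset.range (w - s + 1),
      (-1 : ℚ) ^ i * (w.choose i : ℚ) * ((q : ℚ) ^ (w + 1 - s - i) - 1)) *
    x ^ (n - w) * y ^ w

/-!
Write `M_{n,s} = x^n + ∑_w C(n,w) a_w(w+1-s) x^{n-w} y^w` with
`a_w(e) = ∑_{i<e} (-1)^i C(w,i) (q^{e-i} - 1)`; the sum may run over all `w ≤ n` because
`a_w(0) = 0`. Peeling off the last term gives `a_w(e+1) = q a_w(e) + (q-1) ∑_{i≤e} (-1)^i C(w,i)`,
so the second difference `a_w(e+2) - (q+1) a_w(e+1) + q a_w(e)` telescopes to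
`(q-1) (-1)^{e+1} C(w,e+1)`. What remains is
`∑_w C(n,w) C(w,s) (-1)^{w-s} x^{n-w} y^w = C(n,s) (x-y)^{n-s} y^s`, which is the binomial theorem
once `C(n,w) C(w,s) = C(n,s) C(n-s,w-s)`.
-/

open Finset

theorem sum_range_choose_mul_choose_mul_neg_one_pow {R : Type*} [CommRing R] (x y : R)
    (n s : ℕ) :
    ∑ w ∈ range (n + 1), (n.choose w : R) * w.choose s * (-1) ^ (w - s) * x ^ (n - w) * y ^ w =
      n.choose s * (x - y) ^ (n - s) * y ^ s := by
  rcases lt_or_ge n s with hns | hsn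
  · rw [Nat.choose_eq_zero_of_lt hns, Nat.cast_zero, zero_mul, zero_mul]
    refine sum_eq_zero fun w hw => ?_
    rw [Nat.choose_eq_zero_of_lt (by grind : w < s)]
    simp
  rw [← sum_range_add_sum_Ico _ (by omega : s ≤ n + 1),
    sum_eq_zero fun w hw => by rw [Nat.choose_eq_zero_of_lt (n := w) (by simpa using hw)]; simp,
    zero_add, sum_Ico_eq_sum_range, show n + 1 - s = n - s + 1 by omega, sub_eq_neg_add,
    add_pow, mul_sum, sum_mul]
  refine sum_congr rfl fun j _ => ?_
  have hchoose : (n.choose (s + j) : R) * (s + j).choose s = n.choose s * (n - s).choose j := by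
    have := Nat.choose_mul (n := n) (k := s + j) (Nat.le_add_right s j)
    rw [Nat.add_sub_cancel_left] at this
    exact_mod_cast congrArg (Nat.cast : ℕ → R) this
  rw [hchoose, Nat.add_sub_cancel_left, Nat.sub_sub, neg_pow, pow_add]
  ring

/-- `mdsWeightCoeff q w (w + 1 - s)` is the inner sum of `Mds q n s` at weight `w`; by truncated
subtraction it vanishes for `w < s`, matching the terms missing from `Mds`. -/
noncomputable def mdsWeightCoeff {R : Type*} [CommRing R] (q : R) (w e : ℕ) : R :=
  ∑ i ∈ range e, (-1) ^ i * (w.choose i : R) * (q ^ (e - i) - 1)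

section
variable {R : Type*} [CommRing R] (q : R) (w : ℕ)

@[simp]
theorem mdsWeightCoeff_zero : mdsWeightCoeff q w 0 = 0 := sum_range_zero _

theorem mdsWeightCoeff_succ (e : ℕ) :
    mdsWeightCoeff q w (e + 1) =
      q * mdsWeightCoeff q w e + (q - 1) * ∑ i ∈ range (e + 1), (-1) ^ i * (w.choose i : R) := by
  have hterm : ∀ i ∈ range e, (-1) ^ i * (w.choose i : R) * (q ^ (e + 1 - i) - 1) =
      q * ((-1) ^ i * w.choose i * (q ^ (e - i) - 1)) + (q - 1) * ((-1) ^ i * w.choose i) := by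
    intro i hi
    rw [Nat.sub_add_comm (mem_range.mp hi).le, pow_succ]
    ring
  rw [mdsWeightCoeff, mdsWeightCoeff, sum_range_succ, sum_congr rfl hterm, sum_add_distrib,
    ← mul_sum, ← mul_sum, sum_range_succ _ e, Nat.add_sub_cancel_left, pow_one]
  ring

theorem mdsWeightCoeff_add_two (e : ℕ) :
    mdsWeightCoeff q w (e + 2) - (q + 1) * mdsWeightCoeff q w (e + 1) + q * mdsWeightCoeff q w e =
      (q - 1) * (-1) ^ (e + 1) * w.choose (e + 1) := by
  rw [mdsWeightCoeff_succ q w (e + 1), mdsWeightCoeff_succ q w e, sum_range_succ _ (e + 1)]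
  ring

theorem mdsWeightCoeff_second_difference (s : ℕ) :
    mdsWeightCoeff q w (w + 1 - s) - (q + 1) * mdsWeightCoeff q w (w + 1 - (s + 1)) +
        q * mdsWeightCoeff q w (w + 1 - (s + 2)) =
      (q - 1) * (-1) ^ (w - s) * w.choose s := by
  rcases lt_trichotomy w s with hws | rfl | hsw
  · simp [show w + 1 - s = 0 by omega, show w + 1 - (s + 1) = 0 by omega,
      show w + 1 - (s + 2) = 0 by omega, Nat.choose_eq_zero_of_lt hws]
  · simp [mdsWeightCoeff_succ]
  · obtain ⟨e, rfl⟩ : ∃ e, w = s + (e + 1) := ⟨w - s - 1, by omega⟩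
    rw [show s + (e + 1) + 1 - s = e + 2 by omega, show s + (e + 1) + 1 - (s + 1) = e + 1 by omega,
      show s + (e + 1) + 1 - (s + 2) = e by omega, Nat.add_sub_cancel_left,
      mdsWeightCoeff_add_two, Nat.choose_symm_add]

end

theorem mds_eq_sum_range (q n s : ℕ) (x y : ℚ) :
    Mds q n s x y = x ^ n + ∑ w ∈ range (n + 1),
      (n.choose w : ℚ) * mdsWeightCoeff (q : ℚ) w (w + 1 - s) * x ^ (n - w) * y ^ w := by
  have hcoeff (w : ℕ) : ∑ i ∈ range (w - s + 1),
      (-1 : ℚ) ^ i * (w.choose i : ℚ) * ((q : ℚ) ^ (w + 1 - s - i) - 1) =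
        mdsWeightCoeff (q : ℚ) w (w + 1 - s) := by
    rcases le_or_gt s w with hsw | hws
    · rw [Nat.sub_add_comm hsw]; rfl
    · simp [show w + 1 - s = 0 by omega, show w - s = 0 by omega]
  rw [Mds]
  simp only [hcoeff]
  congr 1
  refine sum_subset (fun w hw => mem_range.2 (Nat.lt_succ_of_le (mem_Icc.1 hw).2))
    fun w hwn hws => ?_
  have hws : w < s := by
    simp only [mem_range, mem_Icc, not_and_or, not_le] at hwn hws
    omega
  simp [show w + 1 - s = 0 by omega]

theorem mds_second_difference_general (q n s : ℕ) :
    ∀ x y : ℚ,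
      Mds q n s x y - ((q : ℚ) + 1) * Mds q n (s + 1) x y + (q : ℚ) * Mds q n (s + 2) x y =
        ((q : ℚ) - 1) * (n.choose s : ℚ) * (x - y) ^ (n - s) * y ^ s := by
  intro x y
  have hsum :
      ∑ w ∈ range (n + 1), (n.choose w : ℚ) * mdsWeightCoeff (q : ℚ) w (w + 1 - s) *
          x ^ (n - w) * y ^ w -
        (q + 1) * ∑ w ∈ range (n + 1), (n.choose w : ℚ) *
          mdsWeightCoeff (q : ℚ) w (w + 1 - (s + 1)) * x ^ (n - w) * y ^ w +
        q * ∑ w ∈ range (n + 1), (n.choose w : ℚ) *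
          mdsWeightCoeff (q : ℚ) w (w + 1 - (s + 2)) * x ^ (n - w) * y ^ w =
      (q - 1) * ∑ w ∈ range (n + 1),
        (n.choose w : ℚ) * w.choose s * (-1) ^ (w - s) * x ^ (n - w) * y ^ w := by
    simp only [mul_sum, ← sum_sub_distrib, ← sum_add_distrib]
    refine sum_congr rfl fun w _ => ?_
    linear_combination ((n.choose w : ℚ) * x ^ (n - w) * y ^ w) *
      mdsWeightCoeff_second_difference (q : ℚ) w s
  rw [mds_eq_sum_range, mds_eq_sum_range, mds_eq_sum_range]
  linear_combination hsum + (q - 1 : ℚ) * sum_range_choose_mul_choose_mul_neg_one_pow x y n s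

/-- For every integer `q ≥ 2` and integers `n, s` with `1 ≤ s ≤ n − 1`, the identity
`M_{n,s}(x,y) − (q+1)·M_{n,s+1}(x,y) + q·M_{n,s+2}(x,y)
  = (q−1)·C(n,s)·(x−y)^{n−s}·y^{s}` holds in `ℚ[x,y]`. -/
theorem mds_second_difference (q n s : ℕ) (hq : 2 ≤ q) (hs : 1 ≤ s) (hsn : s + 1 ≤ n) :
    ∀ x y : ℚ,
      Mds q n s x y - ((q : ℚ) + 1) * Mds q n (s + 1) x y + (q : ℚ) * Mds q n (s + 2) x y =
        ((q : ℚ) - 1) * (n.choose s : ℚ) * (x - y) ^ (n - s) * y ^ s :=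
  mds_second_difference_general q n s
end

section
/- Let C ⊆ F_q^n be a linear code of dimension k, minimum distance d and genus g = n+1−k−d ≥ 1, whose dual code has minimum distance d⊥ and genus g⊥ = k+1−d⊥ ≥ 1, and set r = g + g⊥. Suppose c_0, …, c_{r−2} ∈ ℚ satisfy W_C(x,y) = M_{n,n+1−k}(x,y) + (q−1)·Σ_{i=0}^{r−2} c_i·C(n,d+i)·(x−y)^{n−d−i}·y^{d+i}. Then for d ≤ w ≤ d+g−1 one has W_C^{(w)} = (q−1)·C(n,w)·Σ_{i=0}^{w−d} (−1)^{w−d−i}·C(w,d+i)·c_i, and for d+g ≤ w ≤ n one has W_C^{(w)} = (q−1)·C(n,w)·Σ_{i=0}^{min(w−d, n−d−d⊥)} (−1)^{w−d−i}·C(w,d+i)·c_i + C(n,w)·Σ_{j=0}^{w−n−1+k} (−1)^{j}·C(w,j)·(q^{w−n+k−j} − 1). -/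
/-- The number `W_C^{(w)}` of codewords of the linear code `C` of Hamming weight `w`. -/
noncomputable def wtCount {F : Type*} [Field F] [Fintype F] [DecidableEq F] {n : ℕ}
    (C : Submodule F (Fin n → F)) (w : ℕ) : ℕ :=
  Nat.card {c : Fin n → F // c ∈ C ∧ hammingNorm c = w}

/-- The homogeneous weight enumerator `W_C(x,y) = x^n + Σ_{w=d}^n W_C^{(w)} x^{n-w} y^w`
of a code `C` of minimum distance `d`, evaluated at rationals `x, y`. -/
noncomputable def wEnum {F : Type*} [Field F] [Fintype F] [DecidableEq F] {n : ℕ}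
    (C : Submodule F (Fin n → F)) (d : ℕ) (x y : ℚ) : ℚ :=
  x ^ n + ∑ w ∈ Finset.Icc d n, (wtCount C w : ℚ) * x ^ (n - w) * y ^ w

/-!
Both sides of the hypothesis become polynomials in `y` at `x = 1` that agree on all of `ℚ`,
hence are equal, and `W_C^{(w)}` is read off as the coefficient of `y^w`. The term
`c_i C(n,d+i) (1-y)^{n-d-i} y^{d+i}` contributes `(-1)^{w-d-i} C(n,w) C(w,d+i) c_i` by
`C(n,d+i) C(n-d-i,w-d-i) = C(n,w) C(w,d+i)`, so only `i ≤ w - d` survive, while the MDS part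
only starts at `y^{n+1-k} = y^{d+g}`; the remaining bound `i ≤ g + g⊥ - 2 = n - d - d⊥` is the
length of the Duursma sum.
-/

open Polynomial Finset

lemma coeff_one_sub_X_pow {R : Type*} [CommRing R] (m j : ℕ) :
    ((1 - X : R[X]) ^ m).coeff j = (-1) ^ j * m.choose j := by
  have h : (1 - X : R[X]) ^ m = C ((-1) ^ m) * (X + C (-1)) ^ m := by
    rw [map_pow, ← mul_pow]
    congr 1
    simp only [map_neg, map_one]
    ring
  rw [h, coeff_C_mul, coeff_X_add_C_pow]
  rcases le_or_gt j m with hj | hj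
  · rw [← mul_assoc, ← pow_add, show m + (m - j) = 2 * (m - j) + j by omega, pow_add, pow_mul]
    simp
  · simp [Nat.choose_eq_zero_of_lt hj]

/-- The weight enumerator `x^n + Σ_{w=s}^n a_w x^{n-w} y^w` dehomogenized at `x = 1`. -/
noncomputable def enumPoly {R : Type*} [CommRing R] (s n : ℕ) (a : ℕ → R) : R[X] :=
  1 + ∑ w ∈ Icc s n, C (a w) * X ^ w

lemma coeff_enumPoly {R : Type*} [CommRing R] (s n : ℕ) (a : ℕ → R) {w : ℕ} (hw : w ≠ 0) :
    (enumPoly s n a).coeff w = if s ≤ w ∧ w ≤ n then a w else 0 := by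
  simp [enumPoly, finsetSum_coeff, coeff_one, hw]

lemma eval_enumPoly_wtCount {F : Type*} [Field F] [Fintype F] [DecidableEq F] {n : ℕ}
    (C : Submodule F (Fin n → F)) (d : ℕ) (y : ℚ) :
    (enumPoly d n fun w => (wtCount C w : ℚ)).eval y = wEnum C d 1 y := by
  simp [enumPoly, wEnum, eval_finsetSum]

noncomputable def mdsCoeff (q n s w : ℕ) : ℚ :=
  n.choose w * ∑ i ∈ range (w - s + 1),
    (-1) ^ i * (w.choose i : ℚ) * ((q : ℚ) ^ (w + 1 - s - i) - 1)

lemma eval_enumPoly_mdsCoeff (q n s : ℕ) (y : ℚ) :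
    (enumPoly s n (mdsCoeff q n s)).eval y = Mds q n s 1 y := by
  simp [enumPoly, Mds, mdsCoeff, eval_finsetSum, mul_assoc]

noncomputable def duursmaPoly {R : Type*} [CommRing R] (n d r : ℕ) (c : ℕ → R) : R[X] :=
  ∑ i ∈ range r, C (c i * n.choose (d + i)) * (1 - X) ^ (n - d - i) * X ^ (d + i)

lemma choose_mul_coeff_one_sub_X_pow_mul_X_pow {R : Type*} [CommRing R] {n m w : ℕ}
    (hm : m ≤ w) :
    (n.choose m : R) * ((1 - X : R[X]) ^ (n - m) * X ^ m).coeff w =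
      n.choose w * ((-1) ^ (w - m) * w.choose m) := by
  have hchoose : (n.choose w : R) * w.choose m = n.choose m * (n - m).choose (w - m) := by
    simp only [← Nat.cast_mul, Nat.choose_mul hm]
  rw [coeff_mul_X_pow', if_pos hm, coeff_one_sub_X_pow]
  linear_combination (-(-1 : R) ^ (w - m)) * hchoose

lemma coeff_duursmaPoly {R : Type*} [CommRing R] {n d w : ℕ} (r : ℕ) (c : ℕ → R)
    (hdw : d ≤ w) :
    (duursmaPoly n d r c).coeff w =
      n.choose w *
        ∑ i ∈ range (min (w - d + 1) r), (-1) ^ (w - d - i) * w.choose (d + i) * c i := by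
  have hterm : ∀ i, (C (c i * n.choose (d + i)) * (1 - X) ^ (n - d - i) * X ^ (d + i)).coeff w =
      if d + i ≤ w then n.choose w * ((-1) ^ (w - d - i) * w.choose (d + i) * c i) else 0 := by
    intro i
    split_ifs with hi
    · have h := choose_mul_coeff_one_sub_X_pow_mul_X_pow (R := R) (n := n) hi
      rw [Nat.sub_sub, Nat.sub_sub, mul_assoc, coeff_C_mul]
      linear_combination c i * h
    · rw [coeff_mul_X_pow', if_neg hi]
  have hrange : (range r).filter (fun i => d + i ≤ w) = range (min (w - d + 1) r) := by
    ext i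
    simp only [mem_filter, mem_range]
    omega
  rw [duursmaPoly, finsetSum_coeff, sum_congr rfl fun i _ => hterm i, ← sum_filter, hrange,
    mul_sum]

theorem weights_of_duursma_reduced_general {F : Type*} [Field F] [Fintype F] [DecidableEq F]
    {n k d dperp g gperp q : ℕ}
    (C : Submodule F (Fin n → F))
    (hd2 : ∃ c ∈ C, c ≠ 0 ∧ hammingNorm c = d)
    (hg : 1 ≤ g) (hgdef : n + 1 = k + d + g)
    (hgp : 1 ≤ gperp) (hgpdef : k + 1 = dperp + gperp)
    (c : ℕ → ℚ)
    (hW : ∀ x y : ℚ, wEnum C d x y =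
      Mds q n (n + 1 - k) x y +
        ((q : ℚ) - 1) * ∑ i ∈ Finset.range (g + gperp - 1),
          c i * ((n.choose (d + i) : ℚ)) * (x - y) ^ (n - d - i) * y ^ (d + i)) :
    (∀ w, d ≤ w → w ≤ d + g - 1 →
      (wtCount C w : ℚ) = ((q : ℚ) - 1) * (n.choose w : ℚ) *
        ∑ i ∈ Finset.range (w - d + 1),
          (-1 : ℚ) ^ (w - d - i) * (w.choose (d + i) : ℚ) * c i) ∧
    (∀ w, d + g ≤ w → w ≤ n →
      (wtCount C w : ℚ) = ((q : ℚ) - 1) * (n.choose w : ℚ) *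
        (∑ i ∈ Finset.range (min (w - d) (n - d - dperp) + 1),
          (-1 : ℚ) ^ (w - d - i) * (w.choose (d + i) : ℚ) * c i) +
        (n.choose w : ℚ) * ∑ j ∈ Finset.range (w + k - n),
          (-1 : ℚ) ^ j * (w.choose j : ℚ) * ((q : ℚ) ^ (w + k - n - j) - 1)) := by
  obtain ⟨c₀, -, hc₀, hwt⟩ := hd2
  have hd : 1 ≤ d := hwt ▸ hammingNorm_pos_iff.mpr hc₀
  have hpoly : (enumPoly d n fun w => (wtCount C w : ℚ)) =
      enumPoly (n + 1 - k) n (mdsCoeff q n (n + 1 - k)) +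
        Polynomial.C ((q : ℚ) - 1) * duursmaPoly n d (g + gperp - 1) c := by
    refine Polynomial.funext fun y => ?_
    simpa [eval_enumPoly_wtCount, eval_enumPoly_mdsCoeff, duursmaPoly, eval_finsetSum]
      using hW 1 y
  have hcoeff : ∀ w, d ≤ w → w ≤ n → (wtCount C w : ℚ) =
      (if n + 1 - k ≤ w then mdsCoeff q n (n + 1 - k) w else 0) + ((q : ℚ) - 1) *
        (n.choose w * ∑ i ∈ range (min (w - d + 1) (g + gperp - 1)),
          (-1) ^ (w - d - i) * w.choose (d + i) * c i) := by
    intro w hdw hwn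
    have h := congrArg (coeff · w) hpoly
    simp only [coeff_add, coeff_C_mul, coeff_enumPoly _ _ _ (by omega : w ≠ 0),
      coeff_duursmaPoly _ _ hdw] at h
    simpa [hdw, hwn] using h
  refine ⟨fun w hdw hw => ?_, fun w hdw hwn => ?_⟩
  · rw [hcoeff w hdw (by omega), if_neg (by omega), min_eq_left (by omega)]
    ring
  · rw [hcoeff w (by omega) hwn, if_pos (by omega), mdsCoeff,
      show min (w - d + 1) (g + gperp - 1) = min (w - d) (n - d - dperp) + 1 by omega,
      show w - (n + 1 - k) + 1 = w + k - n by omega, show w + 1 - (n + 1 - k) = w + k - n by omega]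
    ring

/-- The weight distribution of a linear code `C ⊆ F_q^n` of dimension `k`, minimum
distance `d` and genus `g = n+1−k−d ≥ 1`, whose dual has minimum distance `d⊥` and
genus `g⊥ = k+1−d⊥ ≥ 1`, is determined by the coefficients `c_0, …, c_{g+g⊥−2}` of
Duursma's reduced polynomial via the displayed formulas. -/
theorem weights_of_duursma_reduced {F : Type*} [Field F] [Fintype F] [DecidableEq F]
    {n k d dperp g gperp q : ℕ}
    (C Cd : Submodule F (Fin n → F))
    (hq : q = Fintype.card F)
    (hk : Module.finrank F C = k)
    (hd1 : ∀ c ∈ C, c ≠ 0 → d ≤ hammingNorm c)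
    (hd2 : ∃ c ∈ C, c ≠ 0 ∧ hammingNorm c = d)
    (hCd : ∀ y : Fin n → F, y ∈ Cd ↔ ∀ x ∈ C, ∑ i, x i * y i = 0)
    (hdp1 : ∀ c ∈ Cd, c ≠ 0 → dperp ≤ hammingNorm c)
    (hdp2 : ∃ c ∈ Cd, c ≠ 0 ∧ hammingNorm c = dperp)
    (hg : 1 ≤ g) (hgdef : n + 1 = k + d + g)
    (hgp : 1 ≤ gperp) (hgpdef : k + 1 = dperp + gperp)
    (c : ℕ → ℚ)
    (hW : ∀ x y : ℚ, wEnum C d x y =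
      Mds q n (n + 1 - k) x y +
        ((q : ℚ) - 1) * ∑ i ∈ Finset.range (g + gperp - 1),
          c i * ((n.choose (d + i) : ℚ)) * (x - y) ^ (n - d - i) * y ^ (d + i)) :
    (∀ w, d ≤ w → w ≤ d + g - 1 →
      (wtCount C w : ℚ) = ((q : ℚ) - 1) * (n.choose w : ℚ) *
        ∑ i ∈ Finset.range (w - d + 1),
          (-1 : ℚ) ^ (w - d - i) * (w.choose (d + i) : ℚ) * c i) ∧
    (∀ w, d + g ≤ w → w ≤ n →
      (wtCount C w : ℚ) = ((q : ℚ) - 1) * (n.choose w : ℚ) *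
        (∑ i ∈ Finset.range (min (w - d) (n - d - dperp) + 1),
          (-1 : ℚ) ^ (w - d - i) * (w.choose (d + i) : ℚ) * c i) +
        (n.choose w : ℚ) * ∑ j ∈ Finset.range (w + k - n),
          (-1 : ℚ) ^ j * (w.choose j : ℚ) * ((q : ℚ) ^ (w + k - n - j) - 1)) :=
  weights_of_duursma_reduced_general C hd2 hg hgdef hgp hgpdef c hW
end

section
/- Let C ⊆ F_q^n be an F_q-linear code of dimension k and minimum distance d whose genus g = n+1−k−d satisfies g ≥ 1 (i.e. C is not an MDS code). Then the number ν of d-element subsets of {1,…,n} that are the support of some codeword of C of weight d satisfies ν < C(n,d); equivalently, W_C^{(d)} < (q−1)·C(n,d), i.e. the coefficient c_0 = ν / C(n,d) of the Duursma reduced polynomial of C is strictly less than 1. -/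
/-- The support of a word: the set of its nonzero coordinate positions. -/
def wordSupport {F : Type*} [Field F] [DecidableEq F] {n : ℕ} (c : Fin n → F) :
    Finset (Fin n) :=
  Finset.univ.filter fun i => c i ≠ 0

/-!
If every `d`-set of coordinates were the support of a codeword, fix a `(d-1)`-set `B`: the
codewords supported on `insert i B`, for the `n - d + 1` positions `i ∉ B`, form a diagonal
family and are therefore linearly independent, forcing `k ≥ n - d + 1`, against `g ≥ 1`.
So some `d`-set is missed and `ν < C(n,d)`. Two minimum-weight codewords with the same support
that agree at one position of it coincide, since their difference has smaller weight; hence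
each support carries at most `q - 1` codewords of weight `d`, and `W_C^{(d)} ≤ (q-1)·ν`.
-/

open Finset

theorem linearIndependent_of_apply_ne_zero_of_apply_eq_zero {R ι κ : Type*} [Ring R]
    [NoZeroDivisors R] {v : ι → κ → R} {e : ι → κ} (hself : ∀ i, v i (e i) ≠ 0)
    (hother : ∀ i j, j ≠ i → v j (e i) = 0) : LinearIndependent R v := by
  classical
  rw [linearIndependent_iff']
  intro s g hg i hi
  have hgi := congrFun hg (e i)
  rw [Finset.sum_apply, Finset.sum_eq_single i (fun j _ hji => by simp [hother i j hji])
    (absurd hi)] at hgi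
  exact (mul_eq_zero.1 hgi).resolve_right (hself i)

theorem Finset.natCard_subtype_lt_choose {α : Type*} [Fintype α] {P : Finset α → Prop} {d : ℕ}
    (hP : ∀ S, P S → #S = d) {T : Finset α} (hT : #T = d) (hPT : ¬ P T) :
    Nat.card {S // P S} < (Fintype.card α).choose d := by
  classical
  rw [Nat.card_eq_fintype_card, Fintype.card_subtype, ← card_univ, ← card_powersetCard]
  have hsub : univ.filter P ⊆ powersetCard d univ := fun S hS =>
    mem_powersetCard.2 ⟨subset_univ S, hP S (mem_filter.1 hS).2⟩
  refine card_lt_card ((ssubset_iff_of_subset hsub).2 ⟨T, ?_, ?_⟩)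
  · exact mem_powersetCard.2 ⟨subset_univ T, hT⟩
  · simpa using hPT

section Code

variable {F : Type*} [Field F] [DecidableEq F] {n : ℕ}

theorem mem_wordSupport {c : Fin n → F} {i : Fin n} : i ∈ wordSupport c ↔ c i ≠ 0 := by
  simp [wordSupport]

theorem hammingNorm_eq_card_wordSupport (c : Fin n → F) : hammingNorm c = #(wordSupport c) := by
  simp [hammingNorm, wordSupport]

theorem wordSupport_sub_subset_erase {c c' : Fin n → F} (hS : wordSupport c = wordSupport c')
    {i : Fin n} (hi : c i = c' i) : wordSupport (c - c') ⊆ (wordSupport c).erase i := by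
  intro j hj
  rw [mem_wordSupport, Pi.sub_apply, sub_ne_zero] at hj
  refine mem_erase.2 ⟨fun hji => hj (hji ▸ hi), mem_wordSupport.2 fun hcj => hj ?_⟩
  have hc'j : c' j = 0 := by
    by_contra h
    exact mem_wordSupport.1 (hS ▸ mem_wordSupport.2 h) hcj
  rw [hcj, hc'j]

def IsWeightSupport (C : Submodule F (Fin n → F)) (d : ℕ) (S : Finset (Fin n)) : Prop :=
  #S = d ∧ ∃ c ∈ C, hammingNorm c = d ∧ wordSupport c = S

variable {C : Submodule F (Fin n → F)} {d : ℕ}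

theorem eq_of_wordSupport_eq_of_apply_eq (hd : ∀ c ∈ C, c ≠ 0 → d ≤ hammingNorm c)
    {c c' : Fin n → F} (hc : c ∈ C) (hc' : c' ∈ C) (hcd : hammingNorm c = d)
    (hS : wordSupport c = wordSupport c') {i : Fin n} (hci : c i ≠ 0) (hi : c i = c' i) :
    c = c' := by
  by_contra hne
  have hlt : hammingNorm (c - c') < d :=
    calc hammingNorm (c - c') = #(wordSupport (c - c')) := hammingNorm_eq_card_wordSupport _
      _ ≤ #((wordSupport c).erase i) := card_le_card (wordSupport_sub_subset_erase hS hi)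
      _ < #(wordSupport c) := card_erase_lt_of_mem (mem_wordSupport.2 hci)
      _ = d := by rw [← hammingNorm_eq_card_wordSupport, hcd]
  exact hlt.not_ge (hd _ (C.sub_mem hc hc') (sub_ne_zero.2 hne))

theorem wtCount_le_mul_card_isWeightSupport [Fintype F] (hd0 : 0 < d)
    (hd : ∀ c ∈ C, c ≠ 0 → d ≤ hammingNorm c) :
    wtCount C d ≤ (Fintype.card F - 1) * Nat.card {S // IsWeightSupport C d S} := by
  have hne : ∀ c : {c : Fin n → F // c ∈ C ∧ hammingNorm c = d}, (wordSupport c.1).Nonempty :=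
    fun c => card_pos.1 (by rw [← hammingNorm_eq_card_wordSupport, c.2.2]; exact hd0)
  let f (c : {c : Fin n → F // c ∈ C ∧ hammingNorm c = d}) :
      {S // IsWeightSupport C d S} × Fˣ :=
    (⟨wordSupport c.1, by rw [← hammingNorm_eq_card_wordSupport, c.2.2], c.1, c.2.1, c.2.2, rfl⟩,
      Units.mk0 _ (mem_wordSupport.1 ((wordSupport c.1).min'_mem (hne c))))
  have hf : Function.Injective f := by
    rintro c c' hcc'
    simp only [f, Prod.mk.injEq, Units.mk0_inj] at hcc'
    obtain ⟨hS, hval⟩ := hcc'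
    replace hS : wordSupport c.1 = wordSupport c'.1 := congrArg Subtype.val hS
    have hmin : (wordSupport c'.1).min' (hne c') = (wordSupport c.1).min' (hne c) := by
      congr 1
      exact hS.symm
    rw [hmin] at hval
    exact Subtype.ext (eq_of_wordSupport_eq_of_apply_eq hd c.2.1 c'.2.1 c.2.2 hS
      (mem_wordSupport.1 ((wordSupport c.1).min'_mem (hne c))) hval)
  calc wtCount C d ≤ Nat.card ({S // IsWeightSupport C d S} × Fˣ) :=
        Nat.card_le_card_of_injective f hf
    _ = (Fintype.card F - 1) * Nat.card {S // IsWeightSupport C d S} := by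
        rw [Nat.card_prod, Nat.card_units, Nat.card_eq_fintype_card (α := F), mul_comm]

theorem exists_card_eq_forall_wordSupport_ne (hd0 : 0 < d) (hkd : Module.finrank F C + d ≤ n) :
    ∃ T : Finset (Fin n), #T = d ∧ ∀ c ∈ C, wordSupport c ≠ T := by
  by_contra! hall
  obtain ⟨B, -, hB⟩ := exists_subset_card_eq (s := (univ : Finset (Fin n))) (n := d - 1)
    (by rw [card_univ, Fintype.card_fin]; omega)
  have hcard (i : (Bᶜ : Finset (Fin n))) : #(insert i.1 B) = d := by
    rw [card_insert_of_notMem (mem_compl.1 i.2), hB]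
    omega
  choose v hvC hvS using fun i => hall _ (hcard i)
  have hli : LinearIndependent F v := by
    refine linearIndependent_of_apply_ne_zero_of_apply_eq_zero (e := Subtype.val)
      (fun i => mem_wordSupport.1 (hvS i ▸ mem_insert_self _ _)) fun i j hji => ?_
    by_contra hvji
    have hi := hvS j ▸ mem_wordSupport.2 hvji
    rcases mem_insert.1 hi with h | h
    · exact hji (Subtype.ext h).symm
    · exact mem_compl.1 i.2 h
  have hliC : LinearIndependent F fun i => (⟨v i, hvC i⟩ : C) :=
    LinearIndependent.of_comp C.subtype hli
  have := hliC.fintype_card_le_finrank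
  rw [Fintype.card_coe, card_compl, hB, Fintype.card_fin] at this
  omega

end Code

/-- Let `C ⊆ F_q^n` be a linear code of dimension `k` and minimum distance `d` whose
genus `g = n+1−k−d` is at least `1` (i.e. `C` is not MDS, i.e. `k + d ≤ n`). Then the
number `ν` of `d`-element sets of coordinate positions supporting a codeword of weight
`d` satisfies `ν < C(n,d)`; equivalently `W_C^{(d)} < (q−1)·C(n,d)`, i.e. the
coefficient `c_0 = ν / C(n,d)` of Duursma's reduced polynomial is less than `1`. -/
theorem c0_lt_one_of_positive_genus {F : Type*} [Field F] [Fintype F] [DecidableEq F]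
    {n k d : ℕ} (C : Submodule F (Fin n → F))
    (hk : Module.finrank F C = k)
    (hd1 : ∀ c ∈ C, c ≠ 0 → d ≤ hammingNorm c)
    (hd2 : ∃ c ∈ C, c ≠ 0 ∧ hammingNorm c = d)
    (hg : k + d ≤ n) :
    Nat.card {S : Finset (Fin n) //
        S.card = d ∧ ∃ c ∈ C, hammingNorm c = d ∧ wordSupport c = S} < n.choose d ∧
    wtCount C d < (Fintype.card F - 1) * n.choose d ∧
    ((Nat.card {S : Finset (Fin n) //
        S.card = d ∧ ∃ c ∈ C, hammingNorm c = d ∧ wordSupport c = S} : ℚ) /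
      (n.choose d : ℚ)) < 1 := by
  obtain ⟨c₀, -, hc₀, hc₀d⟩ := hd2
  have hd0 : 0 < d := hc₀d ▸ hammingNorm_pos_iff.2 hc₀
  obtain ⟨T, hT, hTC⟩ := exists_card_eq_forall_wordSupport_ne hd0 (hk ▸ hg)
  have hν : Nat.card {S // IsWeightSupport C d S} < n.choose d := by
    simpa using natCard_subtype_lt_choose (fun S hS => hS.1) hT
      fun ⟨_, c, hc, _, hcT⟩ => hTC c hc hcT
  have hq : 0 < Fintype.card F - 1 := by
    have := Fintype.one_lt_card (α := F)
    omega
  refine ⟨hν, ?_, ?_⟩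
  · calc wtCount C d ≤ (Fintype.card F - 1) * Nat.card {S // IsWeightSupport C d S} :=
          wtCount_le_mul_card_isWeightSupport hd0 hd1
      _ < (Fintype.card F - 1) * n.choose d := Nat.mul_lt_mul_of_pos_left hν hq
  · rw [div_lt_one (by exact_mod_cast Nat.choose_pos (by omega))]
    exact_mod_cast hν
end

section
/- Let q ≥ 2 be an integer, g ≥ 1 and g⊥ ≥ 1 integers, and let P, P⊥, D, D⊥ ∈ ℚ[t] be polynomials such that deg P = g + g⊥, P(t) = (1−t)(1−qt)·D(t) + t^{g}, P⊥(t) = (1−t)(1−qt)·D⊥(t) + t^{g⊥}, and P⊥(t) = q^{g}·t^{g+g⊥}·P(1/(qt)) for all nonzero t. If every complex root of P has absolute value 1/√q, then g = g⊥ and P⊥ = P; in particular P satisfies the functional equation P(t) = q^{g} t^{2g} P(1/(qt)) for all nonzero t. -/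
/-!
Every root `α` of `P` in `ℂ` has `|α|² = 1/q`, so `1/(qα) = conj α`; as `P` has rational
coefficients, `α ↦ 1/(qα)` therefore permutes its roots, multiplicities included. The transform
`p(t) ↦ t^n p(1/(qt))`, i.e. `p ↦ (reverse p)(qt)` up to a power of `q`, is multiplicative and
sends `X - α` to a multiple of `X - 1/(qα)`, so `P⊥`, which is `q^g` times the transform of `P`,
is a scalar multiple of `P`. Both take the value `1` at `t = 1`, so `P⊥ = P`, and comparing the
values `q^{-g}` and `q^{-g⊥}` at `t = 1/q` gives `g = g⊥`.
-/

open Polynomial ComplexConjugate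

namespace Polynomial

theorem reverse_map_of_injective {R S : Type*} [Semiring R] [Semiring S] {f : R →+* S}
    (hf : Function.Injective f) (p : R[X]) : (p.map f).reverse = p.reverse.map f := by
  rw [reverse, reverse, natDegree_map_eq_of_injective hf, reflect_map]

theorem reverse_multiset_prod {R : Type*} [CommSemiring R] [NoZeroDivisors R]
    (s : Multiset R[X]) : s.prod.reverse = (s.map reverse).prod := by
  induction s using Multiset.induction_on with
  | empty => simpa using reverse_C (1 : R)
  | cons p s ih =>
    rw [Multiset.prod_cons, reverse_mul_of_domain, ih, Multiset.map_cons, Multiset.prod_cons]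

variable {K : Type*} [Field K]

theorem eval_reflect_of_ne_zero {f : K[X]} {N : ℕ} (hf : f.natDegree ≤ N) {x : K}
    (hx : x ≠ 0) : (f.reflect N).eval x = x ^ N * f.eval x⁻¹ := by
  let := invertibleOfNonzero (inv_ne_zero hx)
  have h := eval₂_reflect_mul_pow (RingHom.id K) x⁻¹ N f hf
  rw [invOf_eq_inv, inv_inv, inv_pow] at h
  rw [eval, eval, ← h]
  field_simp

theorem eq_C_mul_reflect_comp_of_eval_eq [Infinite K] {p f : K[X]} {q : K} (hq : q ≠ 0)
    {g N : ℕ} (hf : f.natDegree ≤ N)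
    (h : ∀ t : K, t ≠ 0 → p.eval t = q ^ g * t ^ N * f.eval (1 / (q * t))) :
    p = C (q ^ g / q ^ N) * (f.reflect N).comp (C q * X) := by
  refine eq_of_infinite_eval_eq _ _ ((Set.finite_singleton 0).infinite_compl.mono fun t ht => ?_)
  have ht : t ≠ 0 := ht
  simp only [Set.mem_ofPred_eq, eval_mul, eval_C, eval_comp, eval_X,
    eval_reflect_of_ne_zero hf (mul_ne_zero hq ht), h t ht, one_div]
  field_simp
  ring

theorem reverse_X_sub_C_comp_C_mul_X {q α : K} (h : q * α ≠ 0) :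
    (X - C α).reverse.comp (C q * X) = C (-(q * α)) * (X - C (q * α)⁻¹) := by
  have hX : (X : K[X]).reverse = 1 := by
    simpa using (reverse_mul_X (1 : K[X])).trans (reverse_C 1)
  rw [sub_eq_add_neg, ← C_neg, reverse_add_C, hX, natDegree_X, pow_one, mul_sub, ← C_mul,
    neg_mul, mul_inv_cancel₀ h]
  simp only [add_comp, one_comp, mul_comp, C_comp, X_comp]
  simp only [C_neg, C_1, C_mul]
  ring

theorem exists_reverse_comp_C_mul_X_eq_C_mul {p : K[X]} (hp : p.Splits) {q : K} (hq : q ≠ 0)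
    (h0 : 0 ∉ p.roots) (hinv : p.roots.map (fun α => (q * α)⁻¹) = p.roots) :
    ∃ c, p.reverse.comp (C q * X) = C c * p := by
  refine ⟨(p.roots.map fun α => -(q * α)).prod, ?_⟩
  have hfactor : ∀ α ∈ p.roots,
      (X - C α).reverse.comp (C q * X) = C (-(q * α)) * (X - C (q * α)⁻¹) :=
    fun α hα => reverse_X_sub_C_comp_C_mul_X (mul_ne_zero hq (ne_of_mem_of_not_mem hα h0))
  have hprod : (p.roots.map (X - C ·)).prod.reverse.comp (C q * X) =
      C (p.roots.map fun α => -(q * α)).prod * (p.roots.map (X - C ·)).prod := by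
    simp only [reverse_multiset_prod, multiset_prod_comp, Multiset.map_map, Function.comp_apply]
    rw [Multiset.map_congr rfl hfactor, Multiset.prod_map_mul, map_multiset_prod,
      Multiset.map_map]
    congr 1
    conv_rhs => rw [← hinv, Multiset.map_map]
    rfl
  conv_lhs => rw [hp.eq_prod_roots]
  rw [reverse_mul_of_domain, reverse_C, mul_comp, C_comp, hprod, mul_left_comm,
    ← hp.eq_prod_roots]

theorem eval_one_of_eval_eq_mul_add_pow {P D : K[X]} {q : K} {g : ℕ}
    (h : ∀ t : K, P.eval t = (1 - t) * (1 - q * t) * D.eval t + t ^ g) :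
    P.eval 1 = 1 := by
  simp [h]

theorem eval_inv_of_eval_eq_mul_add_pow {P D : K[X]} {q : K} {g : ℕ} (hq : q ≠ 0)
    (h : ∀ t : K, P.eval t = (1 - t) * (1 - q * t) * D.eval t + t ^ g) :
    P.eval q⁻¹ = q⁻¹ ^ g := by
  simp [h, mul_inv_cancel₀ hq]

end Polynomial

theorem Complex.inv_ofReal_mul_eq_conj {q : ℝ} (hq : 0 < q) {α : ℂ}
    (hα : ‖α‖ = 1 / √q) :
    ((q : ℂ) * α)⁻¹ = conj α := by
  refine inv_eq_of_mul_eq_one_right ?_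
  rw [mul_assoc, Complex.mul_conj, Complex.normSq_eq_norm_sq, hα, div_pow, one_pow,
    Real.sq_sqrt hq.le]
  have hq' : (q : ℂ) ≠ 0 := Complex.ofReal_ne_zero.mpr hq.ne'
  push_cast
  field_simp

theorem Polynomial.roots_map_inv_ofReal_mul_eq_self {p : ℂ[X]}
    (hp : p.map (starRingEnd ℂ) = p) {q : ℝ} (hq : 0 < q)
    (h : ∀ α ∈ p.roots, ‖α‖ = 1 / √q) :
    p.roots.map (fun α => ((q : ℂ) * α)⁻¹) = p.roots := by
  rw [Multiset.map_congr rfl fun α hα => Complex.inv_ofReal_mul_eq_conj hq (h α hα),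
    ← (IsAlgClosed.splits p).roots_map, hp]

theorem Polynomial.exists_map_reverse_comp_eq_C_mul_of_norm_roots {P : ℚ[X]} {q : ℚ}
    (hq : 0 < q) (hroots : ∀ z : ℂ, aeval z P = 0 → ‖z‖ = 1 / √(q : ℝ)) :
    ∃ c : ℂ,
      (P.reverse.comp (C q * X)).map (algebraMap ℚ ℂ) = C c * P.map (algebraMap ℚ ℂ) := by
  set f := algebraMap ℚ ℂ
  have hroots' : ∀ α ∈ (P.map f).roots, ‖α‖ = 1 / √(q : ℝ) := fun α hα =>
    hroots α (by rw [← eval_map_algebraMap]; exact (mem_roots'.1 hα).2)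
  have hreal : (P.map f).map (starRingEnd ℂ) = P.map f := by
    rw [Polynomial.map_map, Subsingleton.elim ((starRingEnd ℂ).comp f) f]
  have h0 : (0 : ℂ) ∉ (P.map f).roots := fun h => by
    have hpos : (0 : ℝ) < 1 / √(q : ℝ) := by positivity
    rw [← hroots' 0 h, norm_zero] at hpos
    exact lt_irrefl 0 hpos
  obtain ⟨c, hc⟩ := exists_reverse_comp_C_mul_X_eq_C_mul (IsAlgClosed.splits (P.map f))
    (by exact_mod_cast hq.ne' : (q : ℂ) ≠ 0) h0
    (by simpa using roots_map_inv_ofReal_mul_eq_self hreal (by exact_mod_cast hq) hroots')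
  refine ⟨c, ?_⟩
  rw [map_comp, Polynomial.map_mul, map_C, map_X, eq_ratCast,
    ← reverse_map_of_injective f.injective, hc]

theorem rha_implies_formal_self_duality_general (q g gperp : ℕ) (hq : 2 ≤ q)
    (P Pd D Dd : ℚ[X])
    (hdeg : P.natDegree = g + gperp)
    (hPD : ∀ t : ℚ, P.eval t = (1 - t) * (1 - q * t) * D.eval t + t ^ g)
    (hPDd : ∀ t : ℚ, Pd.eval t = (1 - t) * (1 - q * t) * Dd.eval t + t ^ gperp)
    (hfe : ∀ t : ℚ, t ≠ 0 →
      Pd.eval t = (q : ℚ) ^ g * t ^ (g + gperp) * P.eval (1 / (q * t)))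
    (hroots : ∀ z : ℂ, aeval z P = 0 → ‖z‖ = 1 / Real.sqrt q) :
    g = gperp ∧ Pd = P ∧
      ∀ t : ℚ, t ≠ 0 → P.eval t = (q : ℚ) ^ g * t ^ (2 * g) * P.eval (1 / (q * t)) := by
  have hq0 : (q : ℚ) ≠ 0 := by positivity
  have hPd : Pd = C ((q : ℚ) ^ g / q ^ (g + gperp)) * P.reverse.comp (C (q : ℚ) * X) := by
    rw [reverse, hdeg]
    exact eq_C_mul_reflect_comp_of_eval_eq hq0 hdeg.le hfe
  obtain ⟨c, hc⟩ := exists_map_reverse_comp_eq_C_mul_of_norm_roots (q := q) (by positivity)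
    (by simpa using hroots)
  have hPdP : Pd = P := by
    set f := algebraMap ℚ ℂ
    have hmap : Pd.map f = C (f ((q : ℚ) ^ g / q ^ (g + gperp)) * c) * P.map f := by
      rw [hPd, Polynomial.map_mul, map_C, hc, ← mul_assoc, ← C_mul]
    have hk : f ((q : ℚ) ^ g / q ^ (g + gperp)) * c = 1 := by
      simpa [eval_one_map, eval_one_of_eval_eq_mul_add_pow hPD,
        eval_one_of_eval_eq_mul_add_pow hPDd] using (congrArg (eval 1) hmap).symm
    exact map_injective f f.injective (by rw [hmap, hk, C_1, one_mul])
  have hgg : g = gperp := by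
    refine pow_right_injective₀ (inv_pos.mpr (by positivity : (0 : ℚ) < q)) ?_ ?_
    · exact inv_ne_one.mpr (by exact_mod_cast (by omega : q ≠ 1))
    · dsimp only
      rw [← eval_inv_of_eval_eq_mul_add_pow hq0 hPD, ← eval_inv_of_eval_eq_mul_add_pow hq0 hPDd,
        hPdP]
  refine ⟨hgg, hPdP, fun t ht => ?_⟩
  have h := hfe t ht
  rwa [hPdP, ← hgg, ← two_mul] at h

/-- Let `q ≥ 2`, `g, g⊥ ≥ 1`, and let `P, P⊥, D, D⊥ ∈ ℚ[t]` with `deg P = g + g⊥`,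
`P(t) = (1−t)(1−qt)·D(t) + t^g`, `P⊥(t) = (1−t)(1−qt)·D⊥(t) + t^{g⊥}`, and
`P⊥(t) = q^g·t^{g+g⊥}·P(1/(qt))` for all nonzero `t`.  If every complex root of `P`
has absolute value `1/√q`, then `g = g⊥`, `P⊥ = P`, and in particular
`P(t) = q^g t^{2g} P(1/(qt))` for all nonzero `t`. -/
theorem rha_implies_formal_self_duality (q g gperp : ℕ) (hq : 2 ≤ q)
    (hg : 1 ≤ g) (hgp : 1 ≤ gperp)
    (P Pd D Dd : ℚ[X])
    (hdeg : P.natDegree = g + gperp)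
    (hPD : ∀ t : ℚ, P.eval t = (1 - t) * (1 - q * t) * D.eval t + t ^ g)
    (hPDd : ∀ t : ℚ, Pd.eval t = (1 - t) * (1 - q * t) * Dd.eval t + t ^ gperp)
    (hfe : ∀ t : ℚ, t ≠ 0 →
      Pd.eval t = (q : ℚ) ^ g * t ^ (g + gperp) * P.eval (1 / (q * t)))
    (hroots : ∀ z : ℂ, aeval z P = 0 → ‖z‖ = 1 / Real.sqrt q) :
    g = gperp ∧ Pd = P ∧
      ∀ t : ℚ, t ≠ 0 → P.eval t = (q : ℚ) ^ g * t ^ (2 * g) * P.eval (1 / (q * t)) :=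
  rha_implies_formal_self_duality_general q g gperp hq P Pd D Dd hdeg hPD hPDd hfe hroots
end

section
/- Let q ≥ 2, g ≥ 1, k ≥ 1 and 1 ≤ d ≤ 2k be integers and ν ≥ 1 an integer. Suppose P ∈ ℝ[t] is a polynomial of degree 2g satisfying P(t) = q^{g} t^{2g} P(1/(qt)) for all nonzero t, with P(1) = 1 and P(0) = ν / C(2k,d), and assume every complex root of P has absolute value 1/√q. Then q ≤ ((C(2k,d)/ν)^{1/(2g)} + 1)^2; in particular q ≤ (C(2k,d)^{1/(2g)} + 1)^2. -/
open Polynomial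

/-!
Over `ℂ`, `P = c ∏ (X - zᵢ)` with all `‖zᵢ‖ = q^{-1/2}`. Hence `|P(0)| = |c| q^{-g}`, while
`|1 - zᵢ| ≥ 1 - q^{-1/2}` gives `1 = |P(1)| ≥ |c| (1 - q^{-1/2})^{2g}`. Dividing,
`(√q - 1)^{2g} ≤ |P(1)| / |P(0)| = C(2k,d)/ν`, and taking `2g`-th roots bounds `√q`.
-/

theorem Polynomial.norm_eval_eq_mul_prod_roots {K : Type*} [NormedField K] [IsAlgClosed K]
    (p : K[X]) (w : K) :
    ‖p.eval w‖ = ‖p.leadingCoeff‖ * (p.roots.map fun a => ‖w - a‖).prod := by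
  conv_lhs =>
    rw [← C_leadingCoeff_mul_prod_multiset_X_sub_C (IsAlgClosed.card_roots_eq_natDegree (p := p))]
  rw [eval_mul, eval_C, norm_mul, eval_multiset_prod, ← normHom_apply (Multiset.prod _),
    map_multiset_prod, Multiset.map_map, Multiset.map_map]
  simp [Function.comp_def]

theorem Polynomial.norm_eval_zero_mul_le {K : Type*} [NormedField K] [IsAlgClosed K]
    {p : K[X]} {r : ℝ} (hroots : ∀ a ∈ p.roots, ‖a‖ = r) (w : K) :
    ‖p.eval 0‖ * |‖w‖ - r| ^ p.natDegree ≤ ‖p.eval w‖ * r ^ p.natDegree := by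
  have h0 : (p.roots.map fun a => ‖0 - a‖).prod = r ^ p.natDegree := by
    rw [Multiset.map_congr rfl fun a ha => by rw [zero_sub, norm_neg, hroots a ha],
      Multiset.map_const', Multiset.prod_replicate, IsAlgClosed.card_roots_eq_natDegree]
  have hw : |‖w‖ - r| ^ p.natDegree ≤ (p.roots.map fun a => ‖w - a‖).prod := by
    rw [← IsAlgClosed.card_roots_eq_natDegree, ← Multiset.prod_replicate, ← Multiset.map_const']
    exact Multiset.prod_map_le_prod_map₀ _ _ (fun _ _ => abs_nonneg _)
      fun a ha => hroots a ha ▸ abs_norm_sub_norm_le w a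
  have hr : 0 ≤ r ^ p.natDegree := h0 ▸ Multiset.prod_nonneg fun _ hx => by
    obtain ⟨a, -, rfl⟩ := Multiset.mem_map.mp hx
    exact norm_nonneg _
  rw [norm_eval_eq_mul_prod_roots p 0, norm_eval_eq_mul_prod_roots p w, h0, mul_right_comm]
  gcongr

theorem Polynomial.abs_eval_zero_mul_le {P : ℝ[X]} {r : ℝ}
    (hroots : ∀ z : ℂ, aeval z P = 0 → ‖z‖ = r) (x : ℝ) :
    |P.eval 0| * |(|x| - r)| ^ P.natDegree ≤ |P.eval x| * r ^ P.natDegree := by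
  have hroots' : ∀ z ∈ (P.map (algebraMap ℝ ℂ)).roots, ‖z‖ = r := fun z hz =>
    hroots z (by simpa [eval_map_algebraMap] using (mem_roots'.mp hz).2)
  have hnorm (y : ℝ) : ‖(P.map (algebraMap ℝ ℂ)).eval (y : ℂ)‖ = |P.eval y| := by
    simpa using congrArg norm (aeval_algebraMap_apply_eq_algebraMap_eval (A := ℂ) y P)
  have h := norm_eval_zero_mul_le hroots' (x : ℂ)
  rwa [← Complex.ofReal_zero, hnorm, hnorm, Complex.norm_real, Real.norm_eq_abs,
    natDegree_map] at h

theorem le_sq_rpow_add_one {q c : ℝ} {n : ℕ} (hq : 1 ≤ q) (hn : n ≠ 0)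
    (h : (√q - 1) ^ n ≤ c) : q ≤ (c ^ (1 / (n : ℝ)) + 1) ^ 2 := by
  have hs : 0 ≤ √q - 1 := sub_nonneg.mpr (Real.one_le_sqrt.mpr hq)
  have hc : 0 ≤ c := (pow_nonneg hs n).trans h
  have hroot : √q - 1 ≤ c ^ (1 / (n : ℝ)) := by
    rw [one_div, Real.le_rpow_inv_iff_of_pos hs hc (by positivity)]
    exact_mod_cast h
  calc q = √q ^ 2 := (Real.sq_sqrt (by linarith)).symm
    _ ≤ (c ^ (1 / (n : ℝ)) + 1) ^ 2 := by gcongr; linarith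

theorem rha_bounds_field_cardinality_general (q g k d ν : ℕ) (hq : 2 ≤ q) (hg : 1 ≤ g)
    (hd2 : d ≤ 2 * k) (hν : 1 ≤ ν)
    (P : ℝ[X])
    (hdeg : P.natDegree = 2 * g)
    (h1 : P.eval 1 = 1)
    (h0 : P.eval 0 = (ν : ℝ) / ((2 * k).choose d : ℝ))
    (hroots : ∀ z : ℂ, aeval z P = 0 → ‖z‖ = 1 / Real.sqrt q) :
    (q : ℝ) ≤ ((((2 * k).choose d : ℝ) / (ν : ℝ)) ^ ((1 : ℝ) / (2 * g)) + 1) ^ 2 ∧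
    (q : ℝ) ≤ ((((2 * k).choose d : ℝ)) ^ ((1 : ℝ) / (2 * g)) + 1) ^ 2 := by
  have hq1 : (1 : ℝ) ≤ q := by exact_mod_cast (by omega : 1 ≤ q)
  have hC : (0 : ℝ) < (2 * k).choose d := by exact_mod_cast Nat.choose_pos hd2
  have hν1 : (1 : ℝ) ≤ ν := by exact_mod_cast hν
  have hs : 1 ≤ √(q : ℝ) := Real.one_le_sqrt.mpr hq1
  have key : (√(q : ℝ) - 1) ^ (2 * g) ≤ (2 * k).choose d / (ν : ℝ) := by
    have h := Polynomial.abs_eval_zero_mul_le hroots 1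
    rw [h0, h1, hdeg, abs_one, one_mul, abs_of_pos (by positivity),
      abs_of_nonneg (sub_nonneg.mpr (div_le_one_of_le₀ hs (by positivity)))] at h
    rw [one_sub_div (by positivity), div_pow, div_pow, one_pow] at h
    rw [le_div_iff₀ (by positivity), mul_comm]
    field_simp at h
    exact h
  have hn : 2 * g ≠ 0 := by omega
  have hexp : (1 : ℝ) / (2 * g) = 1 / ((2 * g : ℕ) : ℝ) := by push_cast; rfl
  rw [hexp]
  exact ⟨le_sq_rpow_add_one hq1 hn key,
    le_sq_rpow_add_one hq1 hn (key.trans (div_le_self hC.le hν1))⟩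

/-- Let `q ≥ 2`, `g, k, ν ≥ 1` and `1 ≤ d ≤ 2k` be integers. Suppose `P ∈ ℝ[t]` has
degree `2g`, satisfies the functional equation `P(t) = q^g t^{2g} P(1/(qt))` for all
nonzero `t`, has `P(1) = 1` and `P(0) = ν / C(2k,d)`, and all complex roots of `P`
have absolute value `1/√q`.  Then `q ≤ ((C(2k,d)/ν)^{1/(2g)} + 1)²`; in particular
`q ≤ (C(2k,d)^{1/(2g)} + 1)²`. -/
theorem rha_bounds_field_cardinality (q g k d ν : ℕ) (hq : 2 ≤ q) (hg : 1 ≤ g)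
    (hk : 1 ≤ k) (hd : 1 ≤ d) (hd2 : d ≤ 2 * k) (hν : 1 ≤ ν)
    (P : ℝ[X])
    (hdeg : P.natDegree = 2 * g)
    (hfe : ∀ t : ℝ, t ≠ 0 →
      P.eval t = (q : ℝ) ^ g * t ^ (2 * g) * P.eval (1 / (q * t)))
    (h1 : P.eval 1 = 1)
    (h0 : P.eval 0 = (ν : ℝ) / ((2 * k).choose d : ℝ))
    (hroots : ∀ z : ℂ, aeval z P = 0 → ‖z‖ = 1 / Real.sqrt q) :
    (q : ℝ) ≤ ((((2 * k).choose d : ℝ) / (ν : ℝ)) ^ ((1 : ℝ) / (2 * g)) + 1) ^ 2 ∧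
    (q : ℝ) ≤ ((((2 * k).choose d : ℝ)) ^ ((1 : ℝ) / (2 * g)) + 1) ^ 2 :=
  rha_bounds_field_cardinality_general q g k d ν hq hg hd2 hν P hdeg h1 h0 hroots
end

section
/- Let q ≥ 2 and g ≥ 1 be integers, let D ∈ ℚ[t] be a polynomial, and set P(t) := (1−t)(1−qt)·D(t) + t^{g}. Then P(t) = q^{g} t^{2g} P(1/(qt)) holds for all nonzero t if and only if D(t) = q^{g−1} t^{2g−2} D(1/(qt)) holds for all nonzero t. -/
/-! The weight-`n` dual `f ↦ qⁿ t²ⁿ f(1/(qt))` is additive, multiplicative in the weight, fixes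
`tⁿ`, and fixes `(1-t)(1-qt)` in weight one. So the weight-`g` dual of `P` is
`(1-t)(1-qt)` times the weight-`(g-1)` dual of `D`, plus `tᵍ`, and the functional equation of `P`
is that of `D` multiplied by `(1-t)(1-qt)`. The factor cancels away from `t = 1, 1/q`, and the
two missing points follow by continuity, as `ℚ` has no isolated points. -/

open Polynomial Filter Topology

theorem ContinuousAt.eq_of_eventuallyEq_cofinite {X Y : Type*} [TopologicalSpace X] [T1Space X]
    [TopologicalSpace Y] [T2Space Y] {f g : X → Y} {x : X} [(𝓝[≠] x).NeBot]
    (hf : ContinuousAt f x) (hg : ContinuousAt g x) (hfg : f =ᶠ[cofinite] g) : f x = g x :=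
  tendsto_nhds_unique_of_eventuallyEq (hf.tendsto.mono_left nhdsWithin_le_nhds)
    (hg.tendsto.mono_left nhdsWithin_le_nhds) (hfg.filter_mono (nhdsNE_le_cofinite x))

section InversionDual

variable {K : Type*} [Field K]

def inversionDual (q : K) (n : ℕ) (f : K → K) (t : K) : K :=
  q ^ n * t ^ (2 * n) * f (1 / (q * t))

theorem inversionDual_add (q : K) (n : ℕ) (f g : K → K) :
    inversionDual q n (f + g) = inversionDual q n f + inversionDual q n g := by
  ext t; simp only [inversionDual, Pi.add_apply]; ring

theorem inversionDual_mul (q : K) (m n : ℕ) (f g : K → K) :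
    inversionDual q (m + n) (f * g) = inversionDual q m f * inversionDual q n g := by
  ext t; simp only [inversionDual, Pi.mul_apply]; ring

variable {q t : K}

theorem inversionDual_pow_self (hq : q ≠ 0) (ht : t ≠ 0) (n : ℕ) :
    inversionDual q n (· ^ n) t = t ^ n := by
  simp only [inversionDual, pow_mul, ← mul_pow]
  congr 1
  field_simp

theorem inversionDual_one_sub_mul_one_sub (hq : q ≠ 0) (ht : t ≠ 0) :
    inversionDual q 1 (fun s ↦ (1 - s) * (1 - q * s)) t = (1 - t) * (1 - q * t) := by
  simp only [inversionDual]; field_simp; ring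

theorem inversionDual_one_sub_mul_one_sub_mul_add_pow (hq : q ≠ 0) (ht : t ≠ 0) (f : K → K)
    (n : ℕ) :
    inversionDual q (n + 1) (fun s ↦ (1 - s) * (1 - q * s) * f s + s ^ (n + 1)) t =
      (1 - t) * (1 - q * t) * inversionDual q n f t + t ^ (n + 1) := by
  change inversionDual q (n + 1) ((fun s ↦ (1 - s) * (1 - q * s)) * f + (· ^ (n + 1))) t = _
  rw [inversionDual_add, Pi.add_apply, add_comm n 1, inversionDual_mul, Pi.mul_apply,
    inversionDual_one_sub_mul_one_sub hq ht, inversionDual_pow_self hq ht]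

variable [TopologicalSpace K] [IsTopologicalDivisionRing K]

theorem continuousAt_inversionDual {f : K → K} (hf : Continuous f) (hq : q ≠ 0) (ht : t ≠ 0)
    (n : ℕ) : ContinuousAt (inversionDual q n f) t := by
  unfold inversionDual
  fun_prop (disch := exact mul_ne_zero hq ht)

theorem eq_inversionDual_of_mul_eq [T2Space K] [∀ x : K, (𝓝[≠] x).NeBot] {f : K → K}
    (hf : Continuous f) (hq : q ≠ 0) {n : ℕ}
    (h : ∀ s ≠ 0, (1 - s) * (1 - q * s) * f s = (1 - s) * (1 - q * s) * inversionDual q n f s)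
    (ht : t ≠ 0) : f t = inversionDual q n f t := by
  refine hf.continuousAt.eq_of_eventuallyEq_cofinite (continuousAt_inversionDual hf hq ht n) ?_
  refine eventually_cofinite.2 <| (Set.toFinite {0, 1, q⁻¹}).subset fun s hs ↦ ?_
  by_contra hmem
  simp only [Set.mem_insert_iff, Set.mem_singleton_iff, not_or] at hmem
  obtain ⟨hs0, hs1, hsq⟩ := hmem
  have hQ : (1 - s) * (1 - q * s) ≠ 0 :=
    mul_ne_zero (sub_ne_zero.2 (Ne.symm hs1))
      (sub_ne_zero.2 fun h ↦ hsq (eq_inv_of_mul_eq_one_right h.symm))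
  exact hs (mul_left_cancel₀ hQ (h s hs0))

end InversionDual

/-- Let `q ≥ 2` and `g ≥ 1` be integers, `D ∈ ℚ[t]`, and set
`P(t) := (1−t)(1−qt)·D(t) + t^g`.  Then `P(t) = q^g t^{2g} P(1/(qt))` for all nonzero
`t` if and only if `D(t) = q^{g−1} t^{2g−2} D(1/(qt))` for all nonzero `t`. -/
theorem functional_equation_P_iff_D (q g : ℕ) (hq : 2 ≤ q) (hg : 1 ≤ g)
    (D : ℚ[X]) (P : ℚ[X])
    (hP : ∀ t : ℚ, P.eval t = (1 - t) * (1 - q * t) * D.eval t + t ^ g) :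
    (∀ t : ℚ, t ≠ 0 →
        P.eval t = (q : ℚ) ^ g * t ^ (2 * g) * P.eval (1 / (q * t))) ↔
      (∀ t : ℚ, t ≠ 0 →
        D.eval t = (q : ℚ) ^ (g - 1) * t ^ (2 * g - 2) * D.eval (1 / (q * t))) := by
  obtain ⟨n, rfl⟩ := Nat.exists_eq_add_of_le' hg
  have hq0 : (q : ℚ) ≠ 0 := Nat.cast_ne_zero.2 (by omega)
  have hPD (t : ℚ) (ht : t ≠ 0) : inversionDual (q : ℚ) (n + 1) P.eval t =
      (1 - t) * (1 - q * t) * inversionDual (q : ℚ) n D.eval t + t ^ (n + 1) := by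
    rw [funext hP, inversionDual_one_sub_mul_one_sub_mul_add_pow hq0 ht]
  rw [Nat.add_sub_cancel, show 2 * (n + 1) - 2 = 2 * n by omega]
  change (∀ t : ℚ, t ≠ 0 → P.eval t = inversionDual (q : ℚ) (n + 1) P.eval t) ↔
    ∀ t : ℚ, t ≠ 0 → D.eval t = inversionDual (q : ℚ) n D.eval t
  refine ⟨fun hPfe t ht ↦ eq_inversionDual_of_mul_eq D.continuous hq0 (fun s hs ↦ ?_) ht,
    fun hDfe t ht ↦ by rw [hPD t ht, ← hDfe t ht, hP]⟩
  have hPs := hPfe s hs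
  rw [hPD s hs, hP] at hPs
  exact add_right_cancel hPs
end

section
/- Let q be a prime power, C ⊆ F_q^{2k} a linear code of dimension k and minimum distance d with g := k+1−d ≥ 1, and suppose c_0, …, c_{2g−2} ∈ ℚ satisfy both W_C(x,y) = M_{2k,k+1}(x,y) + (q−1)·Σ_{i=0}^{2g−2} c_i·C(2k,d+i)·(x−y)^{2k−d−i}·y^{d+i} and the relations c_{g−1+i} = q^{i}·c_{g−1−i} for all 1 ≤ i ≤ g−1. Then W_C(x,y) = M_{2k,k+1}(x,y) + Σ_{w=d}^{k−1} W_C^{(w)}·φ_w(x,y) + W_C^{(k)}·(x−y)^{k} y^{k}, where φ_w(x,y) = Σ_{s=w}^{k−1} C(2k−w, s−w)·[ (x−y)^{2k−s} y^{s} + q^{k−s}·(x−y)^{s} y^{2k−s} ] + C(2k−w, k)·(x−y)^{k} y^{k} for d ≤ w ≤ k−1. -/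
/-- The polynomial `φ_w(x,y) = Σ_{s=w}^{k−1} C(2k−w, s−w)·[(x−y)^{2k−s} y^s +
q^{k−s} (x−y)^s y^{2k−s}] + C(2k−w, k)·(x−y)^k y^k`. -/
noncomputable def phiPoly (q k w : ℕ) (x y : ℚ) : ℚ :=
  (∑ s ∈ Finset.Icc w (k - 1), ((2 * k - w).choose (s - w) : ℚ) *
    ((x - y) ^ (2 * k - s) * y ^ s + (q : ℚ) ^ (k - s) * (x - y) ^ s * y ^ (2 * k - s))) +
  ((2 * k - w).choose k : ℚ) * (x - y) ^ k * y ^ k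

/-!
Put `A i = (q - 1) c_i C(2k, d + i)`. Substituting `x = 1 + t`, `y = t` in the Duursma
expansion makes `x - y = 1`, while the MDS part only contributes powers `t^w` with `w > k`;
so comparing the coefficients of `t^(d+j)` for `d + j ≤ k` gives
`A j = Σ_{w=d}^{d+j} W^{(w)} C(2k - w, d + j - w)`. The relations `c_{g-1+i} = q^i c_{g-1-i}`
become `A (2g-2-j) = q^(g-1-j) A j`, which folds the Duursma sum onto the weights `d ≤ s ≤ k`;
inserting the `A j` and exchanging the order of summation produces the polynomials `φ_w`.
-/

open Finset Polynomial

lemma sum_range_two_mul_add_one {M : Type*} [AddCommMonoid M] (f : ℕ → M) (m : ℕ) :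
    ∑ i ∈ range (2 * m + 1), f i = ∑ j ∈ range m, (f j + f (2 * m - j)) + f m := by
  rw [two_mul, add_assoc, sum_range_add, sum_range_succ', sum_add_distrib, add_zero,
    ← add_assoc, ← sum_range_reflect (fun i => f (m + (i + 1)))]
  congr 2
  exact sum_congr rfl fun j hj => by rw [mem_range] at hj; congr 1; omega

lemma coeff_sum_C_mul_one_add_X_pow_mul_X_pow {R : Type*} [CommSemiring R]
    (S : Finset ℕ) (f : ℕ → R) (n m : ℕ) :
    (∑ w ∈ S, C (f w) * (1 + X) ^ (n - w) * X ^ w).coeff m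
      = ∑ w ∈ S with w ≤ m, f w * (n - w).choose (m - w) := by
  rw [finsetSum_coeff, sum_filter]
  refine sum_congr rfl fun w _ => ?_
  rw [coeff_mul_X_pow', coeff_C_mul, coeff_one_add_X_pow]

theorem eq_sum_mul_choose_of_forall_eq {n d s r j : ℕ} {W M A : ℕ → ℚ}
    (h : ∀ x y : ℚ, ∑ w ∈ Icc d n, W w * x ^ (n - w) * y ^ w =
      ∑ w ∈ Icc s n, M w * x ^ (n - w) * y ^ w +
        ∑ i ∈ range r, A i * (x - y) ^ (n - d - i) * y ^ (d + i))
    (hjr : j < r) (hjs : d + j < s) (hjn : d + j ≤ n) :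
    A j = ∑ w ∈ Icc d (d + j), W w * (n - w).choose (d + j - w) := by
  have hpoly : (∑ w ∈ Icc d n, C (W w) * (1 + X) ^ (n - w) * X ^ w : ℚ[X]) =
      ∑ w ∈ Icc s n, C (M w) * (1 + X) ^ (n - w) * X ^ w +
        ∑ i ∈ range r, C (A i) * X ^ (d + i) :=
    Polynomial.funext fun t => by simpa [eval_finsetSum] using h (1 + t) t
  have hlow : {w ∈ Icc d n | w ≤ d + j} = Icc d (d + j) := by
    ext w; simp only [mem_filter, mem_Icc]; omega
  have hhigh : {w ∈ Icc s n | w ≤ d + j} = ∅ := by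
    ext w; simp only [mem_filter, mem_Icc, notMem_empty, iff_false]; omega
  have := congrArg (coeff · (d + j)) hpoly
  simp only [coeff_add, coeff_sum_C_mul_one_add_X_pow_mul_X_pow, hlow, hhigh] at this
  simpa [finsetSum_coeff, coeff_C_mul_X_pow, hjr, eq_comm] using this.symm

section SelfDual

variable {d k g : ℕ} {A W : ℕ → ℚ} (q : ℕ) (x y : ℚ)

lemma sum_range_eq_sum_Icc_of_reflect (hk : 0 < k) (hg : 1 ≤ g) (hgdef : k + 1 = d + g)
    (hsymm : ∀ j < g - 1, A (2 * (g - 1) - j) = (q : ℚ) ^ (g - 1 - j) * A j) :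
    ∑ i ∈ range (2 * g - 1), A i * (x - y) ^ (2 * k - d - i) * y ^ (d + i) =
      ∑ s ∈ Icc d (k - 1), A (s - d) *
          ((x - y) ^ (2 * k - s) * y ^ s + (q : ℚ) ^ (k - s) * (x - y) ^ s * y ^ (2 * k - s)) +
        A (k - d) * (x - y) ^ k * y ^ k := by
  rw [show 2 * g - 1 = 2 * (g - 1) + 1 by omega, sum_range_two_mul_add_one,
    ← Ico_add_one_right_eq_Icc, sum_Ico_eq_sum_range, show k - 1 + 1 - d = g - 1 by omega,
    show k - d = g - 1 by omega, show 2 * k - d - (g - 1) = k by omega,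
    show d + (g - 1) = k by omega]
  congr 1
  refine sum_congr rfl fun j hj => ?_
  rw [mem_range] at hj
  rw [hsymm j hj, show 2 * k - d - (2 * (g - 1) - j) = d + j by omega,
    show d + (2 * (g - 1) - j) = 2 * k - (d + j) by omega, show g - 1 - j = k - (d + j) by omega,
    show 2 * k - d - j = 2 * k - (d + j) by omega, Nat.add_sub_cancel_left]
  ring

lemma sum_Icc_add_eq_sum_mul_phiPoly (hk : 0 < k) (hdk : d ≤ k)
    (hcoeff : ∀ s, d ≤ s → s ≤ k →
      A (s - d) = ∑ w ∈ Icc d s, W w * (2 * k - w).choose (s - w)) :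
    ∑ s ∈ Icc d (k - 1), A (s - d) *
          ((x - y) ^ (2 * k - s) * y ^ s + (q : ℚ) ^ (k - s) * (x - y) ^ s * y ^ (2 * k - s)) +
        A (k - d) * (x - y) ^ k * y ^ k =
      ∑ w ∈ Icc d (k - 1), W w * phiPoly q k w x y + W k * (x - y) ^ k * y ^ k := by
  have hcentre : A (k - d) = ∑ w ∈ Icc d (k - 1), W w * (2 * k - w).choose k + W k := by
    rw [hcoeff k hdk le_rfl, ← insert_Icc_sub_one_right_eq_Icc hdk,
      sum_insert (by simp only [mem_Icc]; omega), add_comm]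
    simp only [Nat.sub_self, Nat.choose_zero_right, Nat.cast_one, mul_one]
    refine congrArg (· + W k) (sum_congr rfl fun w hw => ?_)
    rw [mem_Icc] at hw
    rw [Nat.choose_symm_of_eq_add (by omega : 2 * k - w = (k - w) + k)]
  have hswap : ∑ s ∈ Icc d (k - 1), A (s - d) *
        ((x - y) ^ (2 * k - s) * y ^ s + (q : ℚ) ^ (k - s) * (x - y) ^ s * y ^ (2 * k - s)) =
      ∑ w ∈ Icc d (k - 1), W w * ∑ s ∈ Icc w (k - 1), ((2 * k - w).choose (s - w) : ℚ) *
        ((x - y) ^ (2 * k - s) * y ^ s + (q : ℚ) ^ (k - s) * (x - y) ^ s * y ^ (2 * k - s)) := by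
    simp only [mul_sum]
    rw [sum_comm' (t' := Icc d (k - 1)) (s' := fun s => Icc d s)]
    · refine sum_congr rfl fun s hs => ?_
      rw [mem_Icc] at hs
      rw [hcoeff s hs.1 (by omega), sum_mul]
      exact sum_congr rfl fun w _ => by ring
    · intro w s
      simp only [mem_Icc]
      omega
  have hphi : ∀ w, W w * phiPoly q k w x y =
      W w * ∑ s ∈ Icc w (k - 1), ((2 * k - w).choose (s - w) : ℚ) *
        ((x - y) ^ (2 * k - s) * y ^ s + (q : ℚ) ^ (k - s) * (x - y) ^ s * y ^ (2 * k - s)) +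
      W w * (2 * k - w).choose k * (x - y) ^ k * y ^ k := fun w => by
    rw [phiPoly]; ring
  rw [sum_congr rfl fun w _ => hphi w, sum_add_distrib, hswap, hcentre, add_mul, add_mul,
    sum_mul, sum_mul]
  ring

end SelfDual

theorem fsd_wenum_from_low_weights_general {F : Type*} [Field F] [Fintype F] [DecidableEq F]
    {k d g q : ℕ}
    (C : Submodule F (Fin (2 * k) → F))
    (hd2 : ∃ c ∈ C, c ≠ 0 ∧ hammingNorm c = d)
    (hg : 1 ≤ g) (hgdef : k + 1 = d + g)
    (c : ℕ → ℚ)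
    (hW : ∀ x y : ℚ, wEnum C d x y =
      Mds q (2 * k) (k + 1) x y +
        ((q : ℚ) - 1) * ∑ i ∈ Finset.range (2 * g - 1),
          c i * (((2 * k).choose (d + i) : ℚ)) * (x - y) ^ (2 * k - d - i) * y ^ (d + i))
    (hrel : ∀ i, 1 ≤ i → i ≤ g - 1 → c (g - 1 + i) = (q : ℚ) ^ i * c (g - 1 - i)) :
    ∀ x y : ℚ, wEnum C d x y =
      Mds q (2 * k) (k + 1) x y +
        (∑ w ∈ Finset.Icc d (k - 1), (wtCount C w : ℚ) * phiPoly q k w x y) +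
        (wtCount C k : ℚ) * (x - y) ^ k * y ^ k := by
  have hd : 0 < d := by
    obtain ⟨v, -, hv, rfl⟩ := hd2
    exact hammingNorm_pos_iff.2 hv
  set A : ℕ → ℚ := fun i => ((q : ℚ) - 1) * c i * (2 * k).choose (d + i) with hA
  have hexpand : ∀ x y : ℚ, ((q : ℚ) - 1) * ∑ i ∈ range (2 * g - 1),
      c i * (((2 * k).choose (d + i) : ℚ)) * (x - y) ^ (2 * k - d - i) * y ^ (d + i) =
        ∑ i ∈ range (2 * g - 1), A i * (x - y) ^ (2 * k - d - i) * y ^ (d + i) := fun x y => by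
    rw [mul_sum]
    exact sum_congr rfl fun i _ => by ring
  have hcoeff : ∀ s, d ≤ s → s ≤ k →
      A (s - d) = ∑ w ∈ Icc d s, (wtCount C w : ℚ) * (2 * k - w).choose (s - w) := by
    intro s hds hsk
    have hlow := eq_sum_mul_choose_of_forall_eq (j := s - d) (fun x y => by
      simpa only [wEnum, Mds, hexpand, add_assoc, add_right_inj] using hW x y)
      (by omega) (by omega) (by omega)
    rwa [Nat.add_sub_cancel' hds] at hlow
  have hsymm : ∀ j < g - 1, A (2 * (g - 1) - j) = (q : ℚ) ^ (g - 1 - j) * A j := by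
    intro j hj
    simp only [hA]
    rw [show 2 * (g - 1) - j = g - 1 + (g - 1 - j) by omega,
      hrel (g - 1 - j) (by omega) (by omega), Nat.sub_sub_self hj.le,
      Nat.choose_symm_of_eq_add (by omega : 2 * k = _ + (d + j))]
    ring
  intro x y
  rw [hW x y, hexpand, sum_range_eq_sum_Icc_of_reflect q x y (by omega) hg hgdef hsymm,
    sum_Icc_add_eq_sum_mul_phiPoly q x y (by omega) (by omega) hcoeff, add_assoc]

/-- For a formally self-dual linear code `C ⊆ F_q^{2k}` of dimension `k`, minimum
distance `d` and genus `g = k+1−d ≥ 1` (formal self-duality expressed by the relations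
`c_{g−1+i} = q^i c_{g−1−i}` among the Duursma reduced coefficients), the weight
enumerator is determined by the numbers of codewords of weight between `d` and `k`:
`W_C = M_{2k,k+1} + Σ_{w=d}^{k−1} W_C^{(w)} φ_w + W_C^{(k)} (x−y)^k y^k`. -/
theorem fsd_wenum_from_low_weights {F : Type*} [Field F] [Fintype F] [DecidableEq F]
    {k d g q : ℕ}
    (C : Submodule F (Fin (2 * k) → F))
    (hq : q = Fintype.card F)
    (hk : Module.finrank F C = k)
    (hd1 : ∀ c ∈ C, c ≠ 0 → d ≤ hammingNorm c)
    (hd2 : ∃ c ∈ C, c ≠ 0 ∧ hammingNorm c = d)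
    (hg : 1 ≤ g) (hgdef : k + 1 = d + g)
    (c : ℕ → ℚ)
    (hW : ∀ x y : ℚ, wEnum C d x y =
      Mds q (2 * k) (k + 1) x y +
        ((q : ℚ) - 1) * ∑ i ∈ Finset.range (2 * g - 1),
          c i * (((2 * k).choose (d + i) : ℚ)) * (x - y) ^ (2 * k - d - i) * y ^ (d + i))
    (hrel : ∀ i, 1 ≤ i → i ≤ g - 1 → c (g - 1 + i) = (q : ℚ) ^ i * c (g - 1 - i)) :
    ∀ x y : ℚ, wEnum C d x y =
      Mds q (2 * k) (k + 1) x y +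
        (∑ w ∈ Finset.Icc d (k - 1), (wtCount C w : ℚ) * phiPoly q k w x y) +
        (wtCount C k : ℚ) * (x - y) ^ k * y ^ k :=
  fsd_wenum_from_low_weights_general C hd2 hg hgdef c hW hrel
end

section
/- Let q ≥ 2 be an integer and c_0, c_1 ∈ ℚ with c_0 > 0, and set P(t) := (1−t)(1−qt)·(q c_0 t² + c_1 t + c_0) + t² ∈ ℚ[t]. Then every complex root of P has absolute value 1/√q if and only if the following three conditions hold: (1) ((q+1)·c_0 + c_1)² ≥ 4·c_0; (2) q − 4√q + 1 ≤ c_1/c_0 ≤ q + 4√q + 1; (3) c_1 ≤ min( 1/(√q − 1)² − 2√q·c_0 , 1/(√q + 1)² + 2√q·c_0 ). -/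
/-!
The polynomial is invariant, up to the factor `q² t⁴`, under `t ↦ 1 / (q t)`, so it factors as
`q² c₀ (t² + a t + 1/q) (t² + b t + 1/q)`, where `σ = a + b` and `π = a b` are the rational
numbers given by `q c₀ σ = c₁ - (q + 1) c₀` and `q² c₀ π = 1 - (q + 1) c₁`.
Two complex numbers with product `1/q` both have modulus `1/√q` iff they are conjugate, i.e. iff
their sum is real of absolute value at most `2/√q`. So the RHA holds iff the roots `a, b` of
`w² - σ w + π` are real, which is condition (1), and lie in `[-2/√q, 2/√q]`: the vertex `σ/2`
lies there, which is (2), and the quadratic is nonnegative at `±2/√q`, which is (3).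
-/

open Polynomial Complex ComplexConjugate

theorem exists_add_eq_and_mul_eq {K : Type*} [Field K] [IsAlgClosed K] [NeZero (2 : K)]
    (σ π : K) : ∃ a b : K, a + b = σ ∧ a * b = π := by
  obtain ⟨d, hd⟩ := IsAlgClosed.exists_eq_mul_self (σ ^ 2 - 4 * π)
  have h2 : (2 : K) ≠ 0 := two_ne_zero
  refine ⟨(σ + d) / 2, (σ - d) / 2, by field_simp; ring, ?_⟩
  field_simp
  linear_combination hd

theorem Complex.norm_eq_and_norm_eq_iff_of_mul_eq_sq {r : ℝ} (hr : 0 < r) {z w : ℂ}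
    (h : z * w = (r : ℂ) ^ 2) :
    (‖z‖ = r ∧ ‖w‖ = r) ↔ (z + w).im = 0 ∧ |(z + w).re| ≤ 2 * r := by
  constructor
  · rintro ⟨hz, -⟩
    have hz0 : z ≠ 0 := norm_pos_iff.1 (hz ▸ hr)
    have hw : w = conj z := mul_left_cancel₀ hz0 (by rw [h, mul_conj', hz])
    subst hw
    refine ⟨by simp, ?_⟩
    rw [add_conj, ofReal_re, abs_mul, abs_two, ← hz]
    gcongr
    exact abs_re_le_norm z
  · rintro ⟨him, hre⟩
    have hre' := congrArg re h
    have him' := congrArg im h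
    simp only [mul_re, mul_im, ← ofReal_pow, ofReal_re, ofReal_im] at hre' him'
    simp only [add_im, add_re] at him hre
    have hw_im : w.im = -z.im := by linarith
    rw [hw_im] at hre' him'
    have hsum : (z.re + w.re) ^ 2 ≤ (2 * r) ^ 2 := sq_le_sq' (abs_le.1 hre).1 (abs_le.1 hre).2
    have hdiff : (z.re - w.re) ^ 2 ≤ 4 * z.im ^ 2 := by nlinarith
    have hw_re : w.re = z.re := by
      rcases mul_eq_zero.1 (show z.im * (w.re - z.re) = 0 by linarith) with h0 | h0
      · rw [h0] at hdiff; nlinarith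
      · linarith
    have hw : w = conj z := Complex.ext (by simp [hw_re]) (by simp [hw_im])
    subst hw
    have hzr : ‖z‖ ^ 2 = r ^ 2 := by exact_mod_cast (mul_conj' z).symm.trans h
    rw [norm_conj, and_self]
    exact (pow_left_inj₀ (norm_nonneg z) hr.le two_ne_zero).1 hzr

theorem Complex.im_eq_zero_and_im_eq_zero_iff {a b : ℂ} {σ π : ℝ} (hσ : a + b = σ)
    (hπ : a * b = π) : a.im = 0 ∧ b.im = 0 ↔ 0 ≤ σ ^ 2 - 4 * π := by
  have hσre := congrArg re hσ
  have hσim := congrArg im hσ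
  have hπre := congrArg re hπ
  have hπim := congrArg im hπ
  simp only [add_re, add_im, mul_re, mul_im, ofReal_re, ofReal_im] at hσre hσim hπre hπim
  have hb_im : b.im = -a.im := by linarith
  rw [hb_im] at hπre hπim
  have hdiscr : σ ^ 2 - 4 * π = (a.re - b.re) ^ 2 - 4 * a.im ^ 2 := by
    rw [← hσre, ← hπre]; ring
  rw [hb_im, neg_eq_zero, and_self, hdiscr]
  constructor
  · intro h; rw [h]; nlinarith [sq_nonneg (a.re - b.re)]
  · intro h
    by_contra ha
    have hab : a.re = b.re := by
      have := (mul_eq_zero.1 (by linarith : a.im * (b.re - a.re) = 0)).resolve_left ha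
      linarith
    rw [hab, sub_self] at h
    have : 0 < a.im ^ 2 := by positivity
    linarith

theorem abs_le_and_abs_le_iff (x y m : ℝ) :
    |x| ≤ m ∧ |y| ≤ m ↔
      |x + y| ≤ 2 * m ∧ 0 ≤ m ^ 2 - m * (x + y) + x * y ∧ 0 ≤ m ^ 2 + m * (x + y) + x * y := by
  simp only [abs_le]
  constructor
  · rintro ⟨⟨hx₁, hx₂⟩, hy₁, hy₂⟩
    refine ⟨⟨by linarith, by linarith⟩, ?_, ?_⟩ <;> nlinarith
  · rintro ⟨⟨hs₁, hs₂⟩, hm, hp⟩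
    refine ⟨⟨?_, ?_⟩, ?_, ?_⟩ <;> nlinarith

theorem Complex.im_eq_zero_and_abs_re_le_iff {a b : ℂ} {σ π : ℝ} (hσ : a + b = σ)
    (hπ : a * b = π) (m : ℝ) :
    ((a.im = 0 ∧ |a.re| ≤ m) ∧ b.im = 0 ∧ |b.re| ≤ m) ↔
      0 ≤ σ ^ 2 - 4 * π ∧ |σ| ≤ 2 * m ∧ 0 ≤ m ^ 2 - m * σ + π ∧ 0 ≤ m ^ 2 + m * σ + π := by
  rw [and_and_and_comm, ← im_eq_zero_and_im_eq_zero_iff hσ hπ]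
  refine and_congr_right fun ⟨ha, hb⟩ => ?_
  have hre : a.re + b.re = σ := by simpa using congrArg re hσ
  have hmul : a.re * b.re = π := by simpa [ha, hb] using congrArg re hπ
  rw [abs_le_and_abs_le_iff, hre, hmul]

def genusTwoZeta {K : Type*} [CommRing K] (q c₀ c₁ z : K) : K :=
  (1 - z) * (1 - q * z) * (q * c₀ * z ^ 2 + c₁ * z + c₀) + z ^ 2

theorem genusTwoZeta_eq_mul {K : Type*} [Field K] {q c₀ c₁ a b : K} (hq : q ≠ 0)
    (hσ : q * c₀ * (a + b) = c₁ - (q + 1) * c₀) (hπ : q ^ 2 * c₀ * (a * b) = 1 - (q + 1) * c₁)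
    (z : K) :
    genusTwoZeta q c₀ c₁ z = q ^ 2 * c₀ * ((z ^ 2 + a * z + q⁻¹) * (z ^ 2 + b * z + q⁻¹)) := by
  unfold genusTwoZeta
  field_simp
  linear_combination (-(q * z ^ 3 + z)) * hσ - z ^ 2 * hπ

theorem genusTwoZeta_eq_mul_sub {K : Type*} [Field K] {q c₀ c₁ a b z₁ z₂ z₃ z₄ : K}
    (hq : q ≠ 0) (hσ : q * c₀ * (a + b) = c₁ - (q + 1) * c₀)
    (hπ : q ^ 2 * c₀ * (a * b) = 1 - (q + 1) * c₁) (h₁₂ : z₁ + z₂ = -a) (h₁₂' : z₁ * z₂ = q⁻¹)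
    (h₃₄ : z₃ + z₄ = -b) (h₃₄' : z₃ * z₄ = q⁻¹) (z : K) :
    genusTwoZeta q c₀ c₁ z = q ^ 2 * c₀ * ((z - z₁) * (z - z₂) * ((z - z₃) * (z - z₄))) := by
  rw [genusTwoZeta_eq_mul hq hσ hπ,
    show (z - z₁) * (z - z₂) = z ^ 2 + a * z + q⁻¹ by linear_combination (-z) * h₁₂ + h₁₂',
    show (z - z₃) * (z - z₄) = z ^ 2 + b * z + q⁻¹ by linear_combination (-z) * h₃₄ + h₃₄']

namespace GenusTwo

-- `s` stands for `√q` and `m` for `2 / √q`.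

variable {s m c₀ c₁ σ π : ℝ}

theorem sq_sub_four_mul_nonneg_iff (hc₀ : 0 < c₀) (hs : 0 < s)
    (hσ : s ^ 2 * c₀ * σ = c₁ - (s ^ 2 + 1) * c₀)
    (hπ : (s ^ 2) ^ 2 * c₀ * π = 1 - (s ^ 2 + 1) * c₁) :
    0 ≤ σ ^ 2 - 4 * π ↔ 4 * c₀ ≤ ((s ^ 2 + 1) * c₀ + c₁) ^ 2 := by
  have key : (s ^ 2 * c₀) ^ 2 * (σ ^ 2 - 4 * π) = ((s ^ 2 + 1) * c₀ + c₁) ^ 2 - 4 * c₀ := by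
    linear_combination (s ^ 2 * c₀ * σ + c₁ - (s ^ 2 + 1) * c₀) * hσ - 4 * c₀ * hπ
  rw [← sub_nonneg (b := 4 * c₀), ← key, mul_nonneg_iff_of_pos_left (by positivity)]

theorem abs_le_two_mul_iff (hc₀ : 0 < c₀) (hs : 0 < s) (hm : m * s = 2)
    (hσ : s ^ 2 * c₀ * σ = c₁ - (s ^ 2 + 1) * c₀) :
    |σ| ≤ 2 * m ↔ s ^ 2 - 4 * s + 1 ≤ c₁ / c₀ ∧ c₁ / c₀ ≤ s ^ 2 + 4 * s + 1 := by
  have hσ' : s ^ 2 * σ = c₁ / c₀ - (s ^ 2 + 1) := by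
    rw [eq_sub_iff_add_eq, eq_div_iff hc₀.ne']
    linear_combination hσ
  have habs : |s ^ 2 * σ| = s ^ 2 * |σ| := by rw [abs_mul, abs_of_pos (by positivity)]
  rw [← mul_le_mul_iff_of_pos_left (by positivity : 0 < s ^ 2), ← habs, hσ',
    show s ^ 2 * (2 * m) = 4 * s by linear_combination 2 * s * hm, abs_le]
  constructor <;> rintro ⟨h₁, h₂⟩ <;> constructor <;> linarith

theorem sq_sub_mul_add_nonneg_iff (hc₀ : 0 < c₀) (hs : 0 < s) (hm : m * s = 2)
    (hσ : s ^ 2 * c₀ * σ = c₁ - (s ^ 2 + 1) * c₀)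
    (hπ : (s ^ 2) ^ 2 * c₀ * π = 1 - (s ^ 2 + 1) * c₁) :
    0 ≤ m ^ 2 - m * σ + π ↔ c₁ ≤ 1 / (s + 1) ^ 2 + 2 * s * c₀ := by
  have key : (s ^ 2) ^ 2 * c₀ * (m ^ 2 - m * σ + π) = 1 - (s + 1) ^ 2 * (c₁ - 2 * s * c₀) := by
    linear_combination
      (s ^ 2 * c₀ * (m * s + 2) - s * (c₁ - (s ^ 2 + 1) * c₀)) * hm - m * s ^ 2 * hσ + hπ
  rw [← mul_nonneg_iff_of_pos_left (by positivity : 0 < (s ^ 2) ^ 2 * c₀), key, sub_nonneg,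
    ← sub_le_iff_le_add, ← le_div_iff₀' (by positivity)]

theorem sq_add_mul_add_nonneg_iff (hc₀ : 0 < c₀) (hs : 0 < s) (hs₁ : s ≠ 1) (hm : m * s = 2)
    (hσ : s ^ 2 * c₀ * σ = c₁ - (s ^ 2 + 1) * c₀)
    (hπ : (s ^ 2) ^ 2 * c₀ * π = 1 - (s ^ 2 + 1) * c₁) :
    0 ≤ m ^ 2 + m * σ + π ↔ c₁ ≤ 1 / (s - 1) ^ 2 - 2 * s * c₀ := by
  have key : (s ^ 2) ^ 2 * c₀ * (m ^ 2 + m * σ + π) = 1 - (s - 1) ^ 2 * (c₁ + 2 * s * c₀) := by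
    linear_combination
      (s ^ 2 * c₀ * (m * s + 2) + s * (c₁ - (s ^ 2 + 1) * c₀)) * hm + m * s ^ 2 * hσ + hπ
  have hs₁' : 0 < (s - 1) ^ 2 := by positivity
  rw [← mul_nonneg_iff_of_pos_left (by positivity : 0 < (s ^ 2) ^ 2 * c₀), key, sub_nonneg,
    le_sub_iff_add_le, le_div_iff₀' hs₁']

end GenusTwo

theorem forall_norm_eq_of_genusTwoZeta_eq_zero_iff {q c₀ c₁ : ℝ} (hq : 0 < q) (hq₁ : q ≠ 1)
    (hc₀ : 0 < c₀) :
    (∀ z : ℂ, genusTwoZeta (q : ℂ) c₀ c₁ z = 0 → ‖z‖ = 1 / √q) ↔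
      4 * c₀ ≤ ((q + 1) * c₀ + c₁) ^ 2 ∧
        (q - 4 * √q + 1 ≤ c₁ / c₀ ∧ c₁ / c₀ ≤ q + 4 * √q + 1) ∧
        c₁ ≤ min (1 / (√q - 1) ^ 2 - 2 * √q * c₀) (1 / (√q + 1) ^ 2 + 2 * √q * c₀) := by
  obtain ⟨s, hs, rfl⟩ : ∃ s, 0 < s ∧ q = s ^ 2 :=
    ⟨√q, Real.sqrt_pos.2 hq, (Real.sq_sqrt hq.le).symm⟩
  have hs₁ : s ≠ 1 := by rintro rfl; simp at hq₁
  rw [Real.sqrt_sq hs.le]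
  set r : ℝ := 1 / s with hr
  have hr₀ : 0 < r := by positivity
  have hq₀ : ((s ^ 2 : ℝ) : ℂ) ≠ 0 := by exact_mod_cast (pow_pos hs 2).ne'
  have hqr : ((s ^ 2 : ℝ) : ℂ)⁻¹ = (r : ℂ) ^ 2 := by push_cast [hr]; field_simp
  obtain ⟨σ, hσ⟩ : ∃ σ, s ^ 2 * c₀ * σ = c₁ - (s ^ 2 + 1) * c₀ :=
    ⟨(c₁ - (s ^ 2 + 1) * c₀) / (s ^ 2 * c₀), by field_simp⟩
  obtain ⟨π, hπ⟩ : ∃ π, (s ^ 2) ^ 2 * c₀ * π = 1 - (s ^ 2 + 1) * c₁ :=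
    ⟨(1 - (s ^ 2 + 1) * c₁) / ((s ^ 2) ^ 2 * c₀), by field_simp⟩
  obtain ⟨a, b, hab, hab'⟩ := exists_add_eq_and_mul_eq (σ : ℂ) (π : ℂ)
  obtain ⟨z₁, z₂, h₁₂, h₁₂'⟩ := exists_add_eq_and_mul_eq (-a) ((r : ℂ) ^ 2)
  obtain ⟨z₃, z₄, h₃₄, h₃₄'⟩ := exists_add_eq_and_mul_eq (-b) ((r : ℂ) ^ 2)
  have hfactor := genusTwoZeta_eq_mul_sub (c₀ := (c₀ : ℂ)) (c₁ := (c₁ : ℂ)) hq₀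
    (by rw [hab]; exact_mod_cast hσ) (by rw [hab']; exact_mod_cast hπ)
    h₁₂ (h₁₂'.trans hqr.symm) h₃₄ (h₃₄'.trans hqr.symm)
  have hK : ((s ^ 2 : ℝ) : ℂ) ^ 2 * c₀ ≠ 0 := by
    have : (c₀ : ℂ) ≠ 0 := by exact_mod_cast hc₀.ne'
    positivity
  have hroots : (∀ z : ℂ, genusTwoZeta ((s ^ 2 : ℝ) : ℂ) c₀ c₁ z = 0 → ‖z‖ = r) ↔
      (‖z₁‖ = r ∧ ‖z₂‖ = r) ∧ ‖z₃‖ = r ∧ ‖z₄‖ = r := by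
    simp only [hfactor, mul_eq_zero, hK, sub_eq_zero, false_or, or_imp, forall_and, forall_eq]
  have hm : 2 * r * s = 2 := by rw [hr]; field_simp
  rw [hroots, norm_eq_and_norm_eq_iff_of_mul_eq_sq hr₀ h₁₂', h₁₂,
    norm_eq_and_norm_eq_iff_of_mul_eq_sq hr₀ h₃₄', h₃₄]
  simp only [neg_re, neg_im, abs_neg, neg_eq_zero]
  rw [im_eq_zero_and_abs_re_le_iff hab hab', GenusTwo.sq_sub_four_mul_nonneg_iff hc₀ hs hσ hπ,
    GenusTwo.abs_le_two_mul_iff hc₀ hs hm hσ, GenusTwo.sq_sub_mul_add_nonneg_iff hc₀ hs hm hσ hπ,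
    GenusTwo.sq_add_mul_add_nonneg_iff hc₀ hs hs₁ hm hσ hπ, le_min_iff,
    and_comm (a := c₁ ≤ 1 / (s + 1) ^ 2 + 2 * s * c₀)]

/-- Let `q ≥ 2` be an integer and `c₀, c₁ ∈ ℚ` with `c₀ > 0`, and set
`P(t) := (1−t)(1−qt)·(q c₀ t² + c₁ t + c₀) + t²`.  Then every complex root of `P` has
absolute value `1/√q` if and only if: (1) `((q+1)c₀ + c₁)² ≥ 4c₀`;
(2) `q − 4√q + 1 ≤ c₁/c₀ ≤ q + 4√q + 1`; and
(3) `c₁ ≤ min(1/(√q−1)² − 2√q c₀, 1/(√q+1)² + 2√q c₀)`. -/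
theorem rha_for_genus_two (q : ℕ) (hq : 2 ≤ q) (c₀ c₁ : ℚ) (hc₀ : 0 < c₀) :
    (∀ z : ℂ,
        aeval z ((1 - X) * (1 - C (q : ℚ) * X) *
            (C ((q : ℚ) * c₀) * X ^ 2 + C c₁ * X + C c₀) + X ^ 2) = 0 →
        ‖z‖ = 1 / Real.sqrt q) ↔
      ((((q : ℚ) + 1) * c₀ + c₁) ^ 2 ≥ 4 * c₀ ∧
        ((q : ℝ) - 4 * Real.sqrt q + 1 ≤ (c₁ : ℝ) / (c₀ : ℝ) ∧
          (c₁ : ℝ) / (c₀ : ℝ) ≤ (q : ℝ) + 4 * Real.sqrt q + 1) ∧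
        (c₁ : ℝ) ≤ min (1 / (Real.sqrt q - 1) ^ 2 - 2 * Real.sqrt q * (c₀ : ℝ))
          (1 / (Real.sqrt q + 1) ^ 2 + 2 * Real.sqrt q * (c₀ : ℝ))) := by
  have haeval (z : ℂ) : aeval z ((1 - X) * (1 - C (q : ℚ) * X) *
      (C ((q : ℚ) * c₀) * X ^ 2 + C c₁ * X + C c₀) + X ^ 2) =
      genusTwoZeta ((q : ℝ) : ℂ) (c₀ : ℝ) (c₁ : ℝ) z := by
    simp [genusTwoZeta]
  simp only [haeval]
  rw [forall_norm_eq_of_genusTwoZeta_eq_zero_iff (by positivity) (by norm_cast; omega)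
    (by exact_mod_cast hc₀), ge_iff_le]
  norm_cast
end

section
/- Let q ≥ 2 and g ≥ 1 be integers and L ∈ ℚ[t] a polynomial of degree 2g. Then L(t) = q^{g} t^{2g} L(1/(qt)) holds for all nonzero t if and only if (1−t)(1−qt) divides L(t) − L(1)·t^{g} in ℚ[t] and the quotient L'(t) := (L(t) − L(1)·t^{g}) / ((1−t)(1−qt)) is a polynomial of degree 2g−2 satisfying L'(t) = q^{g−1} t^{2g−2} L'(1/(qt)) for all nonzero t. -/
/-! Put `M = L - L(1) t^g`. The functional equation of weight `k`,
`P(t) = q^k t^{2k} P(1/(qt))`, is linear in `P` and adds weights under products; `t^g` and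
`(1-t)(1-qt)` satisfy it with weights `g` and `1`, so `L` satisfies it iff `M` does. Evaluated at
`t = 1` it gives `M(1/q) = q^{-g} M(1) = 0`, so `(1-t)(1-qt) ∣ M`. Conversely the factor
`(1-t)(1-qt)` can be cancelled: off its roots the equation for the quotient follows by division, and
since both sides are polynomials in `t` it then holds everywhere. -/

open Polynomial

variable {K : Type*} [Field K]

def HasFunctionalEquation (q : K) (k : ℕ) (P : K[X]) : Prop :=
  ∀ t : K, t ≠ 0 → P.eval t = q ^ k * t ^ (2 * k) * P.eval (1 / (q * t))

noncomputable def functionalReflection (q : K) (k : ℕ) (P : K[X]) : K[X] :=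
  ∑ i ∈ Finset.range (2 * k + 1), C (P.coeff i * q ^ k / q ^ i) * X ^ (2 * k - i)

theorem eval_functionalReflection {q t : K} (hq : q ≠ 0) (ht : t ≠ 0) {k : ℕ} {P : K[X]}
    (hP : P.natDegree ≤ 2 * k) :
    (functionalReflection q k P).eval t = q ^ k * t ^ (2 * k) * P.eval (1 / (q * t)) := by
  rw [eval_eq_sum_range' (Nat.lt_succ_of_le hP), Finset.mul_sum]
  simp only [functionalReflection, eval_finsetSum, eval_mul, eval_pow, eval_C, eval_X]
  refine Finset.sum_congr rfl fun i hi => ?_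
  rw [← Nat.sub_add_cancel (Finset.mem_range_succ_iff.mp hi), pow_add, Nat.add_sub_cancel,
    div_pow, one_pow, mul_pow]
  field_simp

namespace HasFunctionalEquation

variable {q : K} {a b k : ℕ} {P Q : K[X]}

theorem add (hP : HasFunctionalEquation q k P) (hQ : HasFunctionalEquation q k Q) :
    HasFunctionalEquation q k (P + Q) := fun t ht => by
  rw [eval_add, eval_add, hP t ht, hQ t ht]; ring

theorem sub (hP : HasFunctionalEquation q k P) (hQ : HasFunctionalEquation q k Q) :
    HasFunctionalEquation q k (P - Q) := fun t ht => by
  rw [eval_sub, eval_sub, hP t ht, hQ t ht]; ring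

theorem mul (hP : HasFunctionalEquation q a P) (hQ : HasFunctionalEquation q b Q) :
    HasFunctionalEquation q (a + b) (P * Q) := fun t ht => by
  rw [eval_mul, eval_mul, hP t ht, hQ t ht]; ring

theorem C_mul_X_pow (hq : q ≠ 0) (c : K) : HasFunctionalEquation q k (C c * X ^ k) :=
  fun t ht => by
    simp only [eval_mul, eval_C, eval_pow, eval_X]
    rw [two_mul, pow_add, div_pow, one_pow, mul_pow]
    field_simp

theorem sub_C_mul_X_pow_iff (hq : q ≠ 0) (c : K) :
    HasFunctionalEquation q k (P - C c * X ^ k) ↔ HasFunctionalEquation q k P :=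
  ⟨fun h => by simpa using h.add (C_mul_X_pow hq c), fun h => h.sub (C_mul_X_pow hq c)⟩

theorem one_sub_X_mul_one_sub_C_mul_X (hq : q ≠ 0) :
    HasFunctionalEquation q 1 ((1 - X) * (1 - C q * X)) := fun t ht => by
  simp only [eval_mul, eval_sub, eval_one, eval_C, eval_X]
  field_simp
  ring

theorem isRoot_inv (hq : q ≠ 0) (hP : HasFunctionalEquation q k P) (h1 : P.IsRoot 1) :
    P.IsRoot q⁻¹ := by
  have := hP 1 one_ne_zero
  rw [h1.eq_zero, mul_one, one_div] at this
  exact (mul_eq_zero.mp this.symm).resolve_left (by simp [hq])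

theorem of_eval_eq_of_finite [Infinite K] (hq : q ≠ 0) (hP : P.natDegree ≤ 2 * k)
    {s : Set K} (hs : s.Finite)
    (h : ∀ t ∉ s, t ≠ 0 → P.eval t = q ^ k * t ^ (2 * k) * P.eval (1 / (q * t))) :
    HasFunctionalEquation q k P := by
  have hR : P = functionalReflection q k P := by
    refine eq_of_infinite_eval_eq _ _ ((hs.insert 0).infinite_compl.mono fun t ht => ?_)
    rw [Set.mem_compl_iff, Set.mem_insert_iff, not_or] at ht
    rw [Set.mem_ofPred_eq, eval_functionalReflection hq ht.1 hP, h t ht.2 ht.1]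
  intro t ht
  conv_lhs => rw [hR]
  exact eval_functionalReflection hq ht hP

theorem of_mul_left [Infinite K] {D : K[X]} (hq : q ≠ 0) (hD0 : D ≠ 0)
    (hD : HasFunctionalEquation q 1 D) (hDQ : HasFunctionalEquation q (k + 1) (D * Q))
    (hQ : Q.natDegree ≤ 2 * k) : HasFunctionalEquation q k Q := by
  refine of_eval_eq_of_finite hq hQ (finite_setOfPred_isRoot hD0) fun t hDt ht => ?_
  have hD' := hD t ht
  have hDQ' := hDQ t ht
  rw [eval_mul, eval_mul] at hDQ'
  refine mul_left_cancel₀ hDt ?_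
  linear_combination hDQ' - q ^ k * t ^ (2 * k) * Q.eval (1 / (q * t)) * hD'

end HasFunctionalEquation

theorem one_sub_X_mul_one_sub_C_mul_X_dvd {q : K} (hq0 : q ≠ 0) (hq1 : q ≠ 1) {M : K[X]}
    (h1 : M.IsRoot 1) (hq : M.IsRoot q⁻¹) : (1 - X) * (1 - C q * X) ∣ M := by
  have hcop : IsCoprime (1 - X : K[X]) (1 - C q * X) := by
    have hq1' : 1 - q ≠ 0 := sub_ne_zero.mpr hq1.symm
    refine ⟨C (-q / (1 - q)), C (1 / (1 - q)), ?_⟩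
    calc C (-q / (1 - q)) * (1 - X) + C (1 / (1 - q)) * (1 - C q * X)
        = C (-q / (1 - q) + 1 / (1 - q)) - C (-q / (1 - q) + 1 / (1 - q) * q) * X := by
          simp only [C_add, C_mul]; ring
      _ = 1 := by
          rw [show -q / (1 - q) + 1 / (1 - q) = 1 by field_simp; ring,
            show -q / (1 - q) + 1 / (1 - q) * q = 0 by field_simp; ring]
          simp
  refine hcop.mul_dvd ?_ ?_
  · rw [← neg_sub, neg_dvd, ← C_1]
    exact dvd_iff_isRoot.mpr h1
  · have : 1 - C q * X = C (-q) * (X - C q⁻¹) := by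
      rw [mul_sub, ← C_mul]; simp [hq0]; ring
    rw [this, (isUnit_C.mpr (neg_ne_zero.mpr hq0).isUnit).mul_left_dvd]
    exact dvd_iff_isRoot.mpr hq

/-- Let `q ≥ 2` and `g ≥ 1` be integers and `L ∈ ℚ[t]` of degree `2g`.  Then
`L(t) = q^g t^{2g} L(1/(qt))` for all nonzero `t` if and only if `(1−t)(1−qt)` divides
`L(t) − L(1)·t^g` in `ℚ[t]` and the quotient `L'` is a polynomial of degree `2g−2`
satisfying `L'(t) = q^{g−1} t^{2g−2} L'(1/(qt))` for all nonzero `t`. -/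
theorem functional_equation_iff_reduced (q g : ℕ) (hq : 2 ≤ q) (hg : 1 ≤ g)
    (L : ℚ[X]) (hdeg : L.natDegree = 2 * g) :
    (∀ t : ℚ, t ≠ 0 →
        L.eval t = (q : ℚ) ^ g * t ^ (2 * g) * L.eval (1 / (q * t))) ↔
      ((1 - X) * (1 - C (q : ℚ) * X) ∣ L - C (L.eval 1) * X ^ g ∧
        ((L - C (L.eval 1) * X ^ g) / ((1 - X) * (1 - C (q : ℚ) * X))).natDegree =
          2 * g - 2 ∧
        ∀ t : ℚ, t ≠ 0 →
          ((L - C (L.eval 1) * X ^ g) / ((1 - X) * (1 - C (q : ℚ) * X))).eval t =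
            (q : ℚ) ^ (g - 1) * t ^ (2 * g - 2) *
              ((L - C (L.eval 1) * X ^ g) / ((1 - X) * (1 - C (q : ℚ) * X))).eval
                (1 / (q * t))) := by
  have hq0 : (q : ℚ) ≠ 0 := by norm_cast; omega
  have hq1 : (q : ℚ) ≠ 1 := by norm_cast; omega
  obtain ⟨k, rfl⟩ : ∃ k, g = k + 1 := ⟨g - 1, by omega⟩
  rw [add_tsub_cancel_right, show 2 * (k + 1) - 2 = 2 * k by omega]
  set D : ℚ[X] := (1 - X) * (1 - C (q : ℚ) * X)
  set M := L - C (L.eval 1) * X ^ (k + 1)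
  have hDdeg : D.natDegree = 2 := by
    unfold D; compute_degree!; omega
  have hD0 : D ≠ 0 := ne_zero_of_natDegree_gt (n := 0) (by omega)
  have hFE_D := HasFunctionalEquation.one_sub_X_mul_one_sub_C_mul_X hq0
  change HasFunctionalEquation _ _ L ↔
    D ∣ M ∧ (M / D).natDegree = 2 * k ∧ HasFunctionalEquation _ _ (M / D)
  rw [← HasFunctionalEquation.sub_C_mul_X_pow_iff hq0 (L.eval 1)]
  change HasFunctionalEquation _ _ M ↔ _
  constructor
  · intro hM
    have hM1 : M.IsRoot 1 := by simp [M]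
    obtain ⟨Q, hQ⟩ := one_sub_X_mul_one_sub_C_mul_X_dvd hq0 hq1 hM1 (hM.isRoot_inv hq0 hM1)
    have hMdeg : M.natDegree = 2 * (k + 1) := by
      rw [natDegree_sub_eq_left_of_natDegree_lt, hdeg]
      grw [natDegree_C_mul_le, natDegree_X_pow, hdeg]
      omega
    have hQdeg : Q.natDegree = 2 * k := by
      have hQ0 : Q ≠ 0 := by rintro rfl; simp_all
      have := natDegree_mul hD0 hQ0
      rw [← hQ, hMdeg, hDdeg] at this
      omega
    rw [hQ] at hM
    rw [hQ, mul_div_cancel_left₀ _ hD0]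
    exact ⟨dvd_mul_right _ _, hQdeg, .of_mul_left hq0 hD0 hFE_D hM hQdeg.le⟩
  · rintro ⟨hdvd, -, hFE⟩
    rw [← EuclideanDomain.mul_div_cancel' hD0 hdvd, add_comm]
    exact hFE_D.mul hFE
end

section
/- Let q ≥ 2 and g ≥ 1 be integers and L ∈ ℚ[t] a polynomial of degree 2g. Then L(t) = q^{g} t^{2g} L(1/(qt)) holds for all nonzero t if and only if there exist rational numbers h_0, h_1, …, h_g such that L(t) = Σ_{i=0}^{g} h_i·t^{i}·(1−t)^{g−i}·(1−qt)^{g−i}. -/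
open Polynomial

/-!
The functional equation is linear in `L` and multiplicative, with genera adding: if `L₁`, `L₂`
satisfy it for `g₁`, `g₂`, then `L₁ L₂` satisfies it for `g₁ + g₂`. Since `t` and
`(1 - t)(1 - qt)` satisfy it for `g = 1`, every `tⁱ ((1 - t)(1 - qt))^(g - i)` satisfies it
for `g`.

Conversely, subtracting `L(0) ((1 - t)(1 - qt))^g` from `L` kills its constant term. Comparing
coefficients, the functional equation makes the coefficient of `t^(2g)` equal to `q^g` times the
constant term, so it vanishes as well, and the quotient by `t` satisfies the functional equation
for `g - 1` with degree at most `2(g - 1)`. Induction on `g` gives the `hᵢ`.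
-/

section

variable {K : Type*} [Field K]

def SatisfiesFunctionalEquation (q : K) (g : ℕ) (N : K[X]) : Prop :=
  ∀ t : K, t ≠ 0 → N.eval t = q ^ g * t ^ (2 * g) * N.eval (1 / (q * t))

/-- The denominator of the zeta function of the rational function field `𝔽_q(t)`. -/
noncomputable def zetaDenominator (q : K) : K[X] := (1 - X) * (1 - C q * X)

noncomputable def classNumberSum (q : K) (g : ℕ) (h : ℕ → K) : K[X] :=
  ∑ i ∈ Finset.range (g + 1), C (h i) * X ^ i * zetaDenominator q ^ (g - i)

variable {q : K} {g : ℕ} {M N : K[X]}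

namespace SatisfiesFunctionalEquation

theorem sub (hM : SatisfiesFunctionalEquation q g M) (hN : SatisfiesFunctionalEquation q g N) :
    SatisfiesFunctionalEquation q g (M - N) := fun t ht => by
  simp only [eval_sub, hM t ht, hN t ht]
  ring

theorem C_mul (c : K) (hN : SatisfiesFunctionalEquation q g N) :
    SatisfiesFunctionalEquation q g (C c * N) := fun t ht => by
  simp only [eval_mul, eval_C, hN t ht]
  ring

theorem mul {a b : ℕ} (hM : SatisfiesFunctionalEquation q a M)
    (hN : SatisfiesFunctionalEquation q b N) : SatisfiesFunctionalEquation q (a + b) (M * N) :=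
  fun t ht => by
    simp only [eval_mul, hM t ht, hN t ht]
    ring

theorem pow {a : ℕ} (hM : SatisfiesFunctionalEquation q a M) (n : ℕ) :
    SatisfiesFunctionalEquation q (n * a) (M ^ n) := fun t ht => by
  simp only [eval_pow, hM t ht]
  ring

theorem of_X_mul (hq : q ≠ 0) (hN : SatisfiesFunctionalEquation q (g + 1) (X * N)) :
    SatisfiesFunctionalEquation q g N := fun t ht => by
  have := hN t ht
  simp only [eval_mul, eval_X] at this
  refine mul_left_cancel₀ ht ?_
  rw [this]
  field_simp
  ring

end SatisfiesFunctionalEquation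

theorem satisfiesFunctionalEquation_sum {ι : Type*} (s : Finset ι) {f : ι → K[X]}
    (hf : ∀ i ∈ s, SatisfiesFunctionalEquation q g (f i)) :
    SatisfiesFunctionalEquation q g (∑ i ∈ s, f i) := fun t ht => by
  simp only [eval_finsetSum, Finset.mul_sum]
  exact Finset.sum_congr rfl fun i hi => hf i hi t ht

theorem satisfiesFunctionalEquation_X (hq : q ≠ 0) : SatisfiesFunctionalEquation q 1 X :=
  fun t ht => by
    simp only [eval_X]
    field_simp

theorem satisfiesFunctionalEquation_zetaDenominator (hq : q ≠ 0) :
    SatisfiesFunctionalEquation q 1 (zetaDenominator q) := fun t ht => by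
  simp only [zetaDenominator, eval_mul, eval_sub, eval_one, eval_X, eval_C]
  field_simp
  ring

theorem satisfiesFunctionalEquation_classNumberSum (hq : q ≠ 0) (g : ℕ) (h : ℕ → K) :
    SatisfiesFunctionalEquation q g (classNumberSum q g h) :=
  satisfiesFunctionalEquation_sum _ fun i hi => by
    have := (((satisfiesFunctionalEquation_X hq).pow i).mul
      ((satisfiesFunctionalEquation_zetaDenominator hq).pow (g - i))).C_mul (h i)
    rw [Finset.mem_range] at hi
    rwa [mul_one, mul_one, Nat.add_sub_cancel' (by omega), ← mul_assoc] at this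

theorem Polynomial.eval_reflect {f : K[X]} {n : ℕ} (hf : f.natDegree ≤ n) {t : K}
    (ht : t ≠ 0) :
    (reflect n f).eval t = t ^ n * f.eval t⁻¹ := by
  let _ := invertibleOfNonzero (inv_ne_zero ht)
  have := eval₂_reflect_mul_pow (RingHom.id K) t⁻¹ n f hf
  rw [invOf_eq_inv, inv_inv, eval₂_id, eval₂_id] at this
  rw [← this, mul_left_comm, ← mul_pow, mul_inv_cancel₀ ht, one_pow, mul_one]

theorem SatisfiesFunctionalEquation.eq_C_mul_reflect [Infinite K] (hq : q ≠ 0)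
    (hN : N.natDegree ≤ 2 * g) (H : SatisfiesFunctionalEquation q g N) :
    N = C (q ^ g) * reflect (2 * g) (N.comp (C q⁻¹ * X)) := by
  have hdeg : (N.comp (C q⁻¹ * X)).natDegree ≤ 2 * g := by
    rwa [natDegree_comp, natDegree_C_mul_X _ (inv_ne_zero hq), mul_one]
  refine eq_of_infinite_eval_eq _ _ ((Set.finite_singleton 0).infinite_compl.mono fun t ht => ?_)
  rw [Set.mem_compl_singleton_iff] at ht
  rw [Set.mem_ofPred_eq, H t ht, eval_mul, eval_C, eval_reflect hdeg ht, eval_comp, eval_mul,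
    eval_C, eval_X, one_div, mul_inv, mul_assoc]

theorem SatisfiesFunctionalEquation.coeff_two_mul [Infinite K] (hq : q ≠ 0)
    (hN : N.natDegree ≤ 2 * g) (H : SatisfiesFunctionalEquation q g N) :
    N.coeff (2 * g) = q ^ g * N.coeff 0 := by
  conv_lhs => rw [H.eq_C_mul_reflect hq hN]
  rw [coeff_C_mul, coeff_reflect, revAt_le le_rfl, Nat.sub_self, comp_C_mul_X_coeff, pow_zero,
    mul_one]

theorem natDegree_zetaDenominator_le : (zetaDenominator q).natDegree ≤ 2 := by
  unfold zetaDenominator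
  compute_degree

theorem coeff_zero_zetaDenominator_pow (n : ℕ) : (zetaDenominator q ^ n).coeff 0 = 1 := by
  simp [coeff_zero_eq_eval_zero, zetaDenominator]

theorem classNumberSum_succ (h : ℕ → K) :
    classNumberSum q (g + 1) h =
      X * classNumberSum q g (fun i => h (i + 1)) + C (h 0) * zetaDenominator q ^ (g + 1) := by
  rw [classNumberSum, Finset.sum_range_succ', classNumberSum, Finset.mul_sum]
  congr 1
  · refine Finset.sum_congr rfl fun i _ => ?_
    rw [Nat.add_sub_add_right, pow_succ]
    ring
  · simp

theorem eval_classNumberSum (q t : K) (g : ℕ) (h : ℕ → K) :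
    (classNumberSum q g h).eval t = ∑ i ∈ Finset.range (g + 1),
      h i * t ^ i * (1 - t) ^ (g - i) * (1 - q * t) ^ (g - i) := by
  simp [classNumberSum, zetaDenominator, eval_finsetSum, mul_pow, mul_assoc]

theorem exists_eq_classNumberSum [Infinite K] (hq : q ≠ 0) {R : K[X]} (hR : R.natDegree ≤ 2 * g)
    (H : SatisfiesFunctionalEquation q g R) : ∃ h : ℕ → K, R = classNumberSum q g h := by
  induction g generalizing R with
  | zero =>
    exact ⟨fun _ => R.coeff 0, by simpa [classNumberSum] using eq_C_of_natDegree_le_zero hR⟩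
  | succ g ih =>
    set R' := R - C (R.coeff 0) * zetaDenominator q ^ (g + 1)
    have hR'deg : R'.natDegree ≤ 2 * (g + 1) := by
      refine (natDegree_sub_le _ _).trans (max_le hR (natDegree_C_mul_le _ _ |>.trans ?_))
      exact (natDegree_pow_le_of_le _ natDegree_zetaDenominator_le).trans_eq (mul_comm _ _)
    have hR'fe : SatisfiesFunctionalEquation q (g + 1) R' := by
      have := ((satisfiesFunctionalEquation_zetaDenominator hq).pow (g + 1)).C_mul (R.coeff 0)
      rw [mul_one] at this
      exact H.sub this
    have hR'zero : R'.coeff 0 = 0 := by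
      rw [coeff_sub, coeff_C_mul, coeff_zero_zetaDenominator_pow, mul_one, sub_self]
    have hR'top : R'.coeff (2 * (g + 1)) = 0 := by
      rw [hR'fe.coeff_two_mul hq hR'deg, hR'zero, mul_zero]
    obtain ⟨S, hS⟩ := X_dvd_iff.mpr hR'zero
    have hSdeg : S.natDegree ≤ 2 * g := by
      refine natDegree_le_iff_coeff_eq_zero.mpr fun m hm => ?_
      rw [← coeff_X_mul, ← hS]
      rcases (show 2 * (g + 1) ≤ m + 1 by omega).eq_or_lt with hm | hm
      · rwa [← hm]
      · exact coeff_eq_zero_of_natDegree_lt (hR'deg.trans_lt hm)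
    obtain ⟨c, hc⟩ := ih hSdeg ((hS ▸ hR'fe).of_X_mul hq)
    refine ⟨fun | 0 => R.coeff 0 | i + 1 => c i, ?_⟩
    rw [classNumberSum_succ, ← hc, ← hS, sub_add_cancel]

end

theorem functional_equation_iff_class_number_decomposition_general (q g : ℕ) (hq : 2 ≤ q)
    (L : ℚ[X]) (hdeg : L.natDegree = 2 * g) :
    (∀ t : ℚ, t ≠ 0 →
        L.eval t = (q : ℚ) ^ g * t ^ (2 * g) * L.eval (1 / (q * t))) ↔
      ∃ h : ℕ → ℚ, ∀ t : ℚ,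
        L.eval t = ∑ i ∈ Finset.range (g + 1),
          h i * t ^ i * (1 - t) ^ (g - i) * (1 - q * t) ^ (g - i) := by
  have hq0 : (q : ℚ) ≠ 0 := Nat.cast_ne_zero.mpr (by omega)
  constructor
  · intro H
    obtain ⟨h, rfl⟩ := exists_eq_classNumberSum hq0 hdeg.le H
    exact ⟨h, fun t => eval_classNumberSum _ t g h⟩
  · rintro ⟨h, hL⟩
    rw [Polynomial.funext fun t => (hL t).trans (eval_classNumberSum (q : ℚ) t g h).symm]
    exact satisfiesFunctionalEquation_classNumberSum hq0 g h

/-- Let `q ≥ 2` and `g ≥ 1` be integers and `L ∈ ℚ[t]` of degree `2g`.  Then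
`L(t) = q^g t^{2g} L(1/(qt))` for all nonzero `t` if and only if there exist rational
numbers `h_0, …, h_g` with `L(t) = Σ_{i=0}^{g} h_i·t^i·(1−t)^{g−i}·(1−qt)^{g−i}`. -/
theorem functional_equation_iff_class_number_decomposition (q g : ℕ) (hq : 2 ≤ q)
    (hg : 1 ≤ g) (L : ℚ[X]) (hdeg : L.natDegree = 2 * g) :
    (∀ t : ℚ, t ≠ 0 →
        L.eval t = (q : ℚ) ^ g * t ^ (2 * g) * L.eval (1 / (q * t))) ↔
      ∃ h : ℕ → ℚ, ∀ t : ℚ,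
        L.eval t = ∑ i ∈ Finset.range (g + 1),
          h i * t ^ i * (1 - t) ^ (g - i) * (1 - q * t) ^ (g - i) :=
  functional_equation_iff_class_number_decomposition_general q g hq L hdeg
end

section
/- Let q ≥ 2 and g ≥ 1 be integers, h an integer, and (A_j)_{j ≥ 0} a sequence of integers satisfying A_j = q^{j−g+1}·A_{2g−2−j} + h·(q^{j−g+1} − 1)/(q − 1) for all g ≤ j ≤ 2g−2, and A_j = h·(q^{j−g+1} − 1)/(q − 1) for all j ≥ 2g−1. Let L ∈ ℚ[t] be a polynomial such that the formal power series identity L(t)/((1−t)(1−qt)) = Σ_{j ≥ 0} A_j t^{j} holds. Then L(t) = (1−t)(1−qt)·D(t) + h·t^{g}, where D(t) = Σ_{i=0}^{g−2} A_i·(t^{i} + q^{g−1−i}·t^{2g−2−i}) + A_{g−1}·t^{g−1}; in particular D has integer coefficients and is uniquely determined by A_0, …, A_{g−1}. -/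
open Polynomial PowerSeries

/-!
Since `1 / ((1 - t)(1 - q t)) = ∑ₖ (1 + q + ⋯ + qᵏ) tᵏ` and `1 + q + ⋯ + qᵏ = (qᵏ⁺¹ - 1)/(q - 1)`,
the two Riemann–Roch relations say precisely that `∑ⱼ Aⱼ tʲ = D(t) + h tᵍ / ((1 - t)(1 - q t))`,
coefficient by coefficient; multiplying by `(1 - t)(1 - q t)` gives the formula for `L`.
-/

namespace PowerSeries

variable {R : Type*} [CommRing R]

theorem mk_geom_sum_eq_mk_pow_mul_mk_one (q : R) :
    mk (fun n => ∑ i ∈ Finset.range (n + 1), q ^ i) = mk (fun n => q ^ n) * mk 1 := by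
  ext n
  simp [coeff_mul, Finset.Nat.sum_antidiagonal_eq_sum_range_succ_mk]

theorem mk_pow_mul_one_sub_C_mul_X (q : R) : mk (fun n => q ^ n) * (1 - C q * X) = 1 := by
  simpa [rescale_mk, rescale_X] using congrArg (rescale q) (mk_one_mul_one_sub_eq_one R)

theorem mk_geom_sum_mul_one_sub_X_mul_one_sub_C_mul_X (q : R) :
    mk (fun n => ∑ i ∈ Finset.range (n + 1), q ^ i) * ((1 - X) * (1 - C q * X)) = 1 := by
  rw [mk_geom_sum_eq_mk_pow_mul_mk_one]
  linear_combination (mk 1 * (1 - X)) * mk_pow_mul_one_sub_C_mul_X q + mk_one_mul_one_sub_eq_one R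

end PowerSeries

section Duursma

variable {R : Type*} [CommRing R]

noncomputable def duursmaPolynomial (q : R) (g : ℕ) (a : ℕ → R) : R[X] :=
  (∑ i ∈ Finset.range (g - 1), Polynomial.C (a i) *
      (Polynomial.X ^ i + Polynomial.C (q ^ (g - 1 - i)) * Polynomial.X ^ (2 * g - 2 - i))) +
    Polynomial.C (a (g - 1)) * Polynomial.X ^ (g - 1)

theorem coeff_duursmaPolynomial (q : R) {g : ℕ} (hg : 1 ≤ g) (a : ℕ → R) (n : ℕ) :
    (duursmaPolynomial q g a).coeff n =
      (if n < g then a n else 0) +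
        if g ≤ n ∧ n ≤ 2 * g - 2 then q ^ (n + 1 - g) * a (2 * g - 2 - n) else 0 := by
  have low : ((if n < g - 1 then a n else 0) + if n = g - 1 then a (g - 1) else 0) =
      if n < g then a n else 0 := by
    split_ifs <;> first | omega | simp_all
  have reflected : (∑ i ∈ Finset.range (g - 1),
      if n = 2 * g - 2 - i then a i * q ^ (g - 1 - i) else 0) =
      if g ≤ n ∧ n ≤ 2 * g - 2 then q ^ (n + 1 - g) * a (2 * g - 2 - n) else 0 := by
    split_ifs with hn
    · rw [Finset.sum_eq_single_of_mem (2 * g - 2 - n) (Finset.mem_range.mpr (by omega))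
        fun i _ hi => if_neg (by omega), if_pos (by omega), mul_comm,
        show g - 1 - (2 * g - 2 - n) = n + 1 - g by omega]
    · exact Finset.sum_eq_zero fun i hi => if_neg (by have := Finset.mem_range.mp hi; omega)
  simp only [duursmaPolynomial, coeff_add, finsetSum_coeff, Polynomial.coeff_C_mul,
    Polynomial.coeff_X_pow, mul_add, mul_ite, mul_one, mul_zero, Finset.sum_add_distrib,
    Finset.sum_ite_eq, Finset.mem_range]
  rw [← low, ← reflected]
  ring

end Duursma

theorem mk_eq_duursmaPolynomial_add {K : Type*} [Field K] {q : K} (hq : q ≠ 1) {g : ℕ}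
    (hg : 1 ≤ g) (h : K) (a : ℕ → K)
    (hRR1 : ∀ j, g ≤ j → j ≤ 2 * g - 2 →
      a j = q ^ (j + 1 - g) * a (2 * g - 2 - j) + h * ((q ^ (j + 1 - g) - 1) / (q - 1)))
    (hRR2 : ∀ j, 2 * g - 1 ≤ j → a j = h * ((q ^ (j + 1 - g) - 1) / (q - 1))) :
    PowerSeries.mk a = (duursmaPolynomial q g a : K⟦X⟧) +
      PowerSeries.C h * PowerSeries.X ^ g *
        PowerSeries.mk (fun k => ∑ i ∈ Finset.range (k + 1), q ^ i) := by
  ext n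
  rw [map_add, coeff_mk, Polynomial.coeff_coe, coeff_duursmaPolynomial q hg, mul_assoc,
    PowerSeries.coeff_C_mul, PowerSeries.coeff_X_pow_mul', coeff_mk]
  rcases lt_or_ge n g with hlt | hge
  · simp [hlt, not_le.mpr hlt]
  have hgeom : ∑ i ∈ Finset.range (n - g + 1), q ^ i = (q ^ (n + 1 - g) - 1) / (q - 1) := by
    rw [geom_sum_eq hq, show n - g + 1 = n + 1 - g by omega]
  rcases le_or_gt n (2 * g - 2) with hle | hhigh
  · simp [not_lt.mpr hge, hge, hle, hgeom, hRR1 n hge hle]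
  · simp [not_lt.mpr hge, not_le.mpr hhigh, hge, hgeom, hRR2 n (by omega)]

/-- Let `q ≥ 2` and `g ≥ 1` be integers, `h` an integer, and `(A_j)` a sequence of
integers satisfying the Riemann–Roch type relations
`A_j = q^{j−g+1} A_{2g−2−j} + h·(q^{j−g+1}−1)/(q−1)` for `g ≤ j ≤ 2g−2` and
`A_j = h·(q^{j−g+1}−1)/(q−1)` for `j ≥ 2g−1`.  If `L ∈ ℚ[t]` satisfies the power
series identity `L(t)/((1−t)(1−qt)) = Σ_j A_j t^j`, then
`L(t) = (1−t)(1−qt)·D(t) + h·t^g`, where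
`D(t) = Σ_{i=0}^{g−2} A_i·(t^i + q^{g−1−i} t^{2g−2−i}) + A_{g−1}·t^{g−1}`;
in particular `D` has integer coefficients and is determined by `A_0, …, A_{g−1}`. -/
theorem hasse_weil_reduced_polynomial (q g : ℕ) (hq : 2 ≤ q) (hg : 1 ≤ g)
    (h : ℤ) (A : ℕ → ℤ)
    (hRR1 : ∀ j, g ≤ j → j ≤ 2 * g - 2 →
      (A j : ℚ) = (q : ℚ) ^ (j + 1 - g) * (A (2 * g - 2 - j) : ℚ) +
        (h : ℚ) * (((q : ℚ) ^ (j + 1 - g) - 1) / ((q : ℚ) - 1)))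
    (hRR2 : ∀ j, 2 * g - 1 ≤ j →
      (A j : ℚ) = (h : ℚ) * (((q : ℚ) ^ (j + 1 - g) - 1) / ((q : ℚ) - 1)))
    (L : ℚ[X])
    (hZ : (L : PowerSeries ℚ) =
      ((1 - PowerSeries.X) * (1 - PowerSeries.C (q : ℚ) * PowerSeries.X)) *
        PowerSeries.mk fun j => (A j : ℚ)) :
    L = (1 - Polynomial.X) * (1 - Polynomial.C (q : ℚ) * Polynomial.X) *
        ((∑ i ∈ Finset.range (g - 1), Polynomial.C (A i : ℚ) *
          (Polynomial.X ^ i +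
            Polynomial.C ((q : ℚ) ^ (g - 1 - i)) * Polynomial.X ^ (2 * g - 2 - i))) +
          Polynomial.C (A (g - 1) : ℚ) * Polynomial.X ^ (g - 1)) +
      Polynomial.C (h : ℚ) * Polynomial.X ^ g := by
  have hq1 : (q : ℚ) ≠ 1 := by
    norm_cast
    omega
  have hgeom := mk_geom_sum_mul_one_sub_X_mul_one_sub_C_mul_X (q : ℚ)
  rw [mk_eq_duursmaPolynomial_add hq1 hg (h : ℚ) _ hRR1 hRR2] at hZ
  change L = _ * duursmaPolynomial (q : ℚ) g (fun i => (A i : ℚ)) + _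
  rw [← Polynomial.coe_inj]
  push_cast
  linear_combination hZ + (PowerSeries.C (h : ℚ) * PowerSeries.X ^ g) * hgeom
end
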